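/- arXiv:1704.06722 — 8 statements merged into one kernel-verified Lean document; each statement's English description precedes it below -/
import Mathlib

section
/- Let X and Y be Banach spaces and T : X → Y a bounded linear operator. Then T is compact if and only if there exists a sequence (u_n) of continuous linear functionals in X* with ‖u_n‖ → 0 such that ‖Tx‖ ≤ sup_n |u_n(x)| for every x ∈ X. -/
open Filter Set Metric Topology

/-!
If `T` is compact, so is its adjoint: the functionals `g ∘ T` with `‖g‖ ≤ 1` form a totally
bounded subset of `X*`, because on the compact set `closure (T '' closedBall 0 1)` they are
determined up to `ε` by their values on a finite `ε`-net. By Grothendieck's lemma a totally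
bounded set lies in the closed convex hull of `0` and a null sequence `(uₙ)`, and evaluating
at `x` against a norming functional `g` of `T x` gives `‖T x‖ ≤ supₙ ‖uₙ x‖`.

Conversely, if `‖uₙ‖ < ε` for `n ≥ N`, then on the unit ball `T` is controlled up to `2ε` by
the finitely many coordinates `u₀ x, …, u_{N-1} x`, a bounded map into a finite-dimensional
space, so `T` maps the unit ball to a totally bounded set.
-/

theorem exists_seq_tendsto_forall_subset_range {α : Type*} [TopologicalSpace α] {a : α}
    {B : ℕ → Set α} (hfin : ∀ k, (B k).Finite) (hB : Tendsto B atTop (𝓝 a).smallSets) :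
    ∃ v : ℕ → α, Tendsto v atTop (𝓝 a) ∧ ∀ k, B k ⊆ range v := by
  set l : ℕ → List α := fun k => (hfin k).toFinset.toList
  have hl : ∀ k, ∀ b, b ∈ l k ↔ b ∈ B k := by simp [l]
  set w : ℕ × ℕ → α := fun p => (l p.1).getD p.2 a
  have hw : Tendsto w cofinite (𝓝 a) := by
    intro U hU
    obtain ⟨K, hK⟩ := eventually_atTop.1 (tendsto_smallSets_iff.1 hB U hU)
    refine ((finite_Iio K).prod (finite_Iio (∑ k ∈ Finset.range K, (l k).length))).subset
      fun p hp => ?_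
    by_contra hpK
    refine hp (mem_preimage.2 ?_)
    by_cases hi : p.2 < (l p.1).length
    · have hp1 : K ≤ p.1 := by
        by_contra! hp1
        have := Finset.single_le_sum (f := fun k => (l k).length) (fun _ _ => Nat.zero_le _)
          (Finset.mem_range.2 hp1)
        exact hpK ⟨hp1, by simp only [mem_Iio]; omega⟩
      refine hK p.1 hp1 ((hl _ _).1 ?_)
      simp only [w, List.getD_eq_getElem _ _ hi]
      exact List.getElem_mem hi
    · simp only [w, List.getD_eq_default _ _ (not_lt.1 hi)]
      exact mem_of_mem_nhds hU
  refine ⟨w ∘ Nat.unpair, hw.comp ?_, fun k b hb => ?_⟩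
  · rw [← Nat.cofinite_eq_atTop]
    exact Nat.pairEquiv.symm.injective.tendsto_cofinite
  · obtain ⟨i, hi, rfl⟩ := List.getElem_of_mem ((hl k b).2 hb)
    refine ⟨Nat.pair k i, ?_⟩
    simp only [Function.comp, Nat.unpair_pair, w]
    exact List.getD_eq_getElem _ _ hi

theorem Convex.mem_of_two_pow_smul_sub_mem {E : Type*} [AddCommGroup E] [Module ℝ E]
    {C : Set E} (hC : Convex ℝ C) (h0 : (0 : E) ∈ C) {g : ℕ → E} (hg0 : g 0 = 0)
    (hg : ∀ k, (2 : ℝ) ^ (k + 1) • (g (k + 1) - g k) ∈ C) (m : ℕ) : g m ∈ C := by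
  induction m generalizing g with
  | zero => exact hg0 ▸ h0
  | succ m ih =>
    have hshift := ih (g := fun k => (2 : ℝ) • (g (k + 1) - g 1)) (by simp) fun k => by
      simpa [← smul_sub, smul_smul, ← pow_succ] using hg (k + 1)
    convert hC hshift (hg 0) (by norm_num : (0 : ℝ) ≤ 2⁻¹) (by norm_num : (0 : ℝ) ≤ 2⁻¹)
      (by norm_num) using 1
    simp [smul_smul, hg0]

theorem TotallyBounded.exists_seq_finite_approx {E : Type*} [SeminormedAddCommGroup E]
    {S : Set E} (hS : TotallyBounded S) :
    ∃ R > 0, ∃ F : ℕ → Set E, (∀ k, (F k).Finite) ∧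
      ∀ f ∈ S, ∃ g : ℕ → E, g 0 = 0 ∧ (∀ k, g k ∈ F k) ∧ ∀ k, dist f (g k) < R * 4⁻¹ ^ k := by
  obtain ⟨R, hR0, hSR⟩ := hS.isBounded.subset_ball_lt 0 0
  have hnet : ∀ k : ℕ, ∃ F : Set E, F.Finite ∧ (k = 0 → F = {0}) ∧
      S ⊆ ⋃ g ∈ F, ball g (R * 4⁻¹ ^ k) := by
    rintro (_ | k)
    · exact ⟨{0}, finite_singleton 0, fun _ => rfl, by simpa using hSR⟩
    · obtain ⟨F, hF, hSF⟩ := totallyBounded_iff.1 hS (R * 4⁻¹ ^ (k + 1)) (by positivity)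
      exact ⟨F, hF, nofun, hSF⟩
  choose F hFfin hF0 hSF using hnet
  refine ⟨R, hR0, F, hFfin, fun f hf => ?_⟩
  have happrox : ∀ k, ∃ g ∈ F k, dist f g < R * 4⁻¹ ^ k := fun k => by simpa using hSF k hf
  choose g hgF hfg using happrox
  exact ⟨g, by simpa [hF0 0 rfl] using hgF 0, hgF, hfg⟩

theorem exists_tendsto_zero_subset_closure_convexHull_of_totallyBounded {E : Type*}
    [SeminormedAddCommGroup E] [NormedSpace ℝ E] {S : Set E} (hS : TotallyBounded S) :
    ∃ v : ℕ → E, Tendsto v atTop (𝓝 0) ∧ S ⊆ closure (convexHull ℝ (insert 0 (range v))) := by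
  obtain ⟨R, hR0, F, hFfin, happrox⟩ := hS.exists_seq_finite_approx
  -- Consecutive approximants are `2 R 4⁻ᵏ`-close, so rescaling their differences by `2ᵏ⁺¹`
  -- still gives a null family, and `g m` is a convex combination of `0` and these (weights `2⁻ᵏ⁻¹`).
  set B : ℕ → Set E := fun k => (fun p : E × E => (2 : ℝ) ^ (k + 1) • (p.1 - p.2)) ''
    {p ∈ F (k + 1) ×ˢ F k | ‖p.1 - p.2‖ ≤ 2 * R * 4⁻¹ ^ k}
  have hBfin : ∀ k, (B k).Finite := fun k =>
    (((hFfin (k + 1)).prod (hFfin k)).subset (sep_subset _ _)).image _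
  have hB : ∀ k, ∀ b ∈ B k, ‖b‖ ≤ 4 * R * 2⁻¹ ^ k := by
    rintro k - ⟨p, ⟨-, hp⟩, rfl⟩
    calc ‖(2 : ℝ) ^ (k + 1) • (p.1 - p.2)‖ ≤ 2 ^ (k + 1) * (2 * R * 4⁻¹ ^ k) := by
          rw [norm_smul, Real.norm_of_nonneg (by positivity)]; gcongr
      _ = 4 * R * 2⁻¹ ^ k := by
          have h2 : (2 : ℝ) ^ k * 2⁻¹ ^ k = 1 := by rw [← mul_pow]; norm_num
          rw [show (4 : ℝ)⁻¹ = 2⁻¹ * 2⁻¹ by norm_num, mul_pow, pow_succ]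
          linear_combination (4 * R * 2⁻¹ ^ k) * h2
  have hBsmall : Tendsto B atTop (𝓝 0).smallSets := by
    have hr : Tendsto (fun k : ℕ => 4 * R * (2⁻¹ : ℝ) ^ k) atTop (𝓝 0) := by
      simpa using (tendsto_pow_atTop_nhds_zero_of_lt_one (by norm_num : (0 : ℝ) ≤ 2⁻¹)
        (by norm_num)).const_mul (4 * R)
    exact ((tendsto_closedBall_smallSets 0).comp hr).smallSets_mono
      (Eventually.of_forall fun k b hb => mem_closedBall_zero_iff.2 (hB k b hb))
  obtain ⟨v, hv, hBv⟩ := exists_seq_tendsto_forall_subset_range hBfin hBsmall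
  refine ⟨v, hv, fun f hf => ?_⟩
  obtain ⟨g, hg0, hgF, hfg⟩ := happrox f hf
  have hstep : ∀ k, (2 : ℝ) ^ (k + 1) • (g (k + 1) - g k) ∈ range v := fun k => by
    refine hBv k ⟨(g (k + 1), g k), ⟨⟨hgF _, hgF _⟩, ?_⟩, rfl⟩
    calc ‖g (k + 1) - g k‖ ≤ dist f (g (k + 1)) + dist f (g k) := by
          rw [← dist_eq_norm]; exact dist_triangle_left _ _ _
      _ ≤ R * 4⁻¹ ^ (k + 1) + R * 4⁻¹ ^ k := add_le_add (hfg _).le (hfg _).le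
      _ ≤ 2 * R * 4⁻¹ ^ k := by
          have : (4 : ℝ)⁻¹ ^ (k + 1) ≤ 4⁻¹ ^ k :=
            pow_le_pow_of_le_one (by norm_num) (by norm_num) k.le_succ
          nlinarith
  have hlim : Tendsto g atTop (𝓝 f) := by
    rw [tendsto_iff_dist_tendsto_zero]
    refine squeeze_zero (fun _ => dist_nonneg) (fun k => (dist_comm _ _).trans_le (hfg k).le) ?_
    simpa using (tendsto_pow_atTop_nhds_zero_of_lt_one (by norm_num : (0 : ℝ) ≤ 4⁻¹)
      (by norm_num)).const_mul R
  refine mem_closure_of_tendsto hlim (Eventually.of_forall fun m => ?_)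
  exact (convex_convexHull ℝ _).mem_of_two_pow_smul_sub_mem
    (subset_convexHull ℝ _ (mem_insert _ _)) hg0
    (fun k => subset_convexHull ℝ _ (mem_insert_of_mem _ (hstep k))) m

theorem Bornology.IsBounded.totallyBounded {α : Type*} [PseudoMetricSpace α] [ProperSpace α]
    {s : Set α} (hs : Bornology.IsBounded s) : TotallyBounded s :=
  hs.isCompact_closure.totallyBounded.subset subset_closure

theorem exists_finite_cover_image_of_dist_lt {α β γ : Type*} [PseudoMetricSpace β]
    [PseudoMetricSpace γ] {s : Set α} {φ : α → β} {ψ : α → γ} {δ ε : ℝ}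
    (hφ : TotallyBounded (φ '' s)) (hδ : 0 < δ)
    (hψ : ∀ a ∈ s, ∀ b ∈ s, dist (φ a) (φ b) < δ → dist (ψ a) (ψ b) < ε) :
    ∃ t : Set γ, t.Finite ∧ ψ '' s ⊆ ⋃ y ∈ t, ball y ε := by
  obtain ⟨t, hts, htfin, hcov⟩ :=
    exists_subset_image_finite_and.1 (finite_approx_of_totallyBounded hφ δ hδ)
  refine ⟨ψ '' t, htfin.image ψ, ?_⟩
  rintro - ⟨a, ha, rfl⟩
  rw [biUnion_image] at hcov ⊢
  obtain ⟨b, hb, hab⟩ := mem_iUnion₂.1 (hcov (mem_image_of_mem φ ha))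
  exact mem_iUnion₂.2 ⟨b, hb, hψ a ha b (hts hb) hab⟩

section Dual

variable {𝕜 X Y : Type*} [RCLike 𝕜] [NormedAddCommGroup X] [NormedSpace 𝕜 X]
  [NormedAddCommGroup Y] [NormedSpace 𝕜 Y]

theorem ContinuousLinearMap.norm_comp_le_of_subset_biUnion_ball {F : Type*}
    [NormedAddCommGroup F] [NormedSpace 𝕜 F] {T : X →L[𝕜] Y} {g : Y →L[𝕜] F} {C : Set Y}
    {δ η : ℝ} (hC : T '' closedBall 0 1 ⊆ ⋃ c ∈ C, ball c δ) (hg : ∀ c ∈ C, ‖g c‖ ≤ η) :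
    ‖g ∘L T‖ ≤ ‖g‖ * δ + η := by
  obtain ⟨c₀, hc₀, h₀⟩ := mem_iUnion₂.1 (hC ⟨0, mem_closedBall_self zero_le_one, map_zero T⟩)
  have hbound : 0 ≤ ‖g‖ * δ + η := add_nonneg
    (mul_nonneg (norm_nonneg g) (dist_nonneg.trans (mem_ball.1 h₀).le))
    ((norm_nonneg _).trans (hg c₀ hc₀))
  refine ContinuousLinearMap.opNorm_le_of_unit_norm hbound fun x hx => ?_
  obtain ⟨c, hc, hxc⟩ :=
    mem_iUnion₂.1 (hC (mem_image_of_mem T (mem_closedBall_zero_iff.2 hx.le)))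
  calc ‖g (T x)‖ = ‖g (T x - c) + g c‖ := by rw [map_sub, sub_add_cancel]
    _ ≤ ‖g‖ * ‖T x - c‖ + η := (norm_add_le _ _).trans (add_le_add (g.le_opNorm _) (hg c hc))
    _ ≤ ‖g‖ * δ + η := by gcongr; exact (mem_ball_iff_norm.1 hxc).le

theorem IsCompactOperator.totallyBounded_image_comp_closedBall {T : X →L[𝕜] Y}
    (hT : IsCompactOperator T) :
    TotallyBounded ((fun g : Y →L[𝕜] 𝕜 => g ∘L T) '' closedBall 0 1) := by
  rw [totallyBounded_iff]
  intro ε hε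
  obtain ⟨C, -, hCfin, hC⟩ := finite_approx_of_totallyBounded
    ((hT.isCompact_closure_image_closedBall 1).totallyBounded.subset subset_closure)
    (ε / 4) (by positivity)
  have := hCfin.fintype
  let φ : (Y →L[𝕜] 𝕜) →L[𝕜] (C → 𝕜) :=
    ContinuousLinearMap.pi fun c => ContinuousLinearMap.apply 𝕜 𝕜 (c : Y)
  refine exists_finite_cover_image_of_dist_lt
    (φ.lipschitz.isBounded_image isBounded_closedBall).totallyBounded (δ := ε / 4)
    (by positivity) fun g hg h hh hgh => ?_
  have hgh' : ∀ c ∈ C, ‖(g - h) c‖ ≤ ε / 4 := fun c hc =>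
    calc ‖(g - h) c‖ = ‖(φ g - φ h) ⟨c, hc⟩‖ := rfl
      _ ≤ ‖φ g - φ h‖ := norm_le_pi_norm _ _
      _ ≤ ε / 4 := (dist_eq_norm (φ g) (φ h) ▸ hgh).le
  have hnorm : ‖g - h‖ ≤ 2 := (norm_sub_le g h).trans
    (by rw [mem_closedBall_zero_iff] at hg hh; linarith)
  rw [dist_eq_norm, ← ContinuousLinearMap.sub_comp]
  calc ‖(g - h) ∘L T‖ ≤ ‖g - h‖ * (ε / 4) + ε / 4 :=
        ContinuousLinearMap.norm_comp_le_of_subset_biUnion_ball hC hgh'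
    _ ≤ 2 * (ε / 4) + ε / 4 := by gcongr
    _ < ε := by linarith

theorem totallyBounded_image_closedBall_of_norm_le_iSup {T : X →L[𝕜] Y}
    {u : ℕ → X →L[𝕜] 𝕜} (hu : Tendsto (fun n => ‖u n‖) atTop (𝓝 0))
    (hT : ∀ x, ‖T x‖ ≤ ⨆ n, ‖u n x‖) :
    TotallyBounded (T '' closedBall 0 1) := by
  rw [totallyBounded_iff]
  intro ε hε
  obtain ⟨N, hN⟩ := eventually_atTop.1 (hu.eventually (gt_mem_nhds (by positivity : 0 < ε / 4)))
  let φ : X →L[𝕜] (Fin N → 𝕜) := ContinuousLinearMap.pi fun i => u i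
  refine exists_finite_cover_image_of_dist_lt
    (φ.lipschitz.isBounded_image isBounded_closedBall).totallyBounded (δ := ε / 2)
    (by positivity) fun x hx y hy hxy => ?_
  have hnorm : ‖x - y‖ ≤ 2 := (norm_sub_le x y).trans
    (by rw [mem_closedBall_zero_iff] at hx hy; linarith)
  rw [dist_eq_norm, ← map_sub]
  refine (hT _).trans_lt ((ciSup_le fun n => ?_).trans_lt (half_lt_self hε))
  rcases lt_or_ge n N with hn | hn
  · calc ‖u n (x - y)‖ = ‖(φ x - φ y) ⟨n, hn⟩‖ := by simp [φ]
      _ ≤ ‖φ x - φ y‖ := norm_le_pi_norm _ _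
      _ ≤ ε / 2 := (dist_eq_norm (φ x) (φ y) ▸ hxy).le
  · calc ‖u n (x - y)‖ ≤ ‖u n‖ * ‖x - y‖ := (u n).le_opNorm _
      _ ≤ ε / 4 * 2 := by gcongr; exact (hN n hn).le
      _ = ε / 2 := by ring

theorem ContinuousLinearMap.norm_apply_le_iSup_of_mem_closure_convexHull
    {v : ℕ → X →L[𝕜] 𝕜} (hv : Bornology.IsBounded (range v)) {f : X →L[𝕜] 𝕜}
    (hf : f ∈ closure (convexHull ℝ (insert 0 (range v)))) (x : X) :
    ‖f x‖ ≤ ⨆ n, ‖v n x‖ := by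
  obtain ⟨M, hM⟩ := isBounded_iff_forall_norm_le.1 hv
  have hbdd : BddAbove (range fun n => ‖v n x‖) :=
    ⟨M * ‖x‖, forall_mem_range.2 fun n =>
      ((v n).le_opNorm x).trans (by gcongr; exact hM _ (mem_range_self n))⟩
  set V := ⨆ n, ‖v n x‖
  let evalAt : (X →L[𝕜] 𝕜) →L[𝕜] 𝕜 := ContinuousLinearMap.apply 𝕜 𝕜 x
  have hclosed : IsClosed (evalAt ⁻¹' closedBall 0 V) :=
    isClosed_closedBall.preimage evalAt.continuous
  have hconvex : Convex ℝ (evalAt ⁻¹' closedBall 0 V) :=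
    (convex_closedBall 0 V).linear_preimage (evalAt.toLinearMap.restrictScalars ℝ)
  have hsub : insert 0 (range v) ⊆ evalAt ⁻¹' closedBall 0 V := by
    refine insert_subset ?_ (range_subset_iff.2 fun n => ?_) <;>
      simp only [mem_preimage, mem_closedBall_zero_iff]
    · simpa using (norm_nonneg _).trans (le_ciSup hbdd 0)
    · exact le_ciSup hbdd n
  exact mem_closedBall_zero_iff.1 (closure_minimal (convexHull_min hsub hconvex) hclosed hf)

end Dual

theorem terzioglu_isCompactOperator_iff_general {𝕜 X Y : Type*} [RCLike 𝕜]
    [NormedAddCommGroup X] [NormedSpace 𝕜 X]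
    [NormedAddCommGroup Y] [NormedSpace 𝕜 Y] [CompleteSpace Y]
    (T : X →L[𝕜] Y) :
    IsCompactOperator T ↔
      ∃ u : ℕ → (X →L[𝕜] 𝕜),
        Tendsto (fun n => ‖u n‖) atTop (nhds 0) ∧
        ∀ x : X, ‖T x‖ ≤ ⨆ n, ‖u n x‖ := by
  constructor
  · intro hT
    obtain ⟨u, hu, hS⟩ := exists_tendsto_zero_subset_closure_convexHull_of_totallyBounded
      hT.totallyBounded_image_comp_closedBall
    refine ⟨u, tendsto_zero_iff_norm_tendsto_zero.1 hu, fun x => ?_⟩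
    obtain ⟨g, hg, hgx⟩ := exists_dual_vector'' 𝕜 (T x)
    simpa [hgx] using ContinuousLinearMap.norm_apply_le_iSup_of_mem_closure_convexHull
      (isBounded_range_of_tendsto u hu) (hS ⟨g, mem_closedBall_zero_iff.2 hg, rfl⟩) x
  · rintro ⟨u, hu, hTu⟩
    exact (isCompactOperator_iff_isCompact_closure_image_closedBall (T : X →ₗ[𝕜] Y) one_pos).2
      ((totallyBounded_image_closedBall_of_norm_le_iSup hu hTu).closure.isCompact_of_isClosed
        isClosed_closure)

/-- **Terzioğlu's theorem.** A bounded linear operator `T : X → Y` between Banach spaces is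
compact if and only if there is a sequence `(uₙ)` of continuous linear functionals on `X` with
`‖uₙ‖ → 0` such that `‖T x‖ ≤ sup_n |uₙ x|` for every `x`. -/
theorem terzioglu_isCompactOperator_iff {𝕜 X Y : Type*} [RCLike 𝕜]
    [NormedAddCommGroup X] [NormedSpace 𝕜 X] [CompleteSpace X]
    [NormedAddCommGroup Y] [NormedSpace 𝕜 Y] [CompleteSpace Y]
    (T : X →L[𝕜] Y) :
    IsCompactOperator T ↔
      ∃ u : ℕ → (X →L[𝕜] 𝕜),
        Tendsto (fun n => ‖u n‖) atTop (nhds 0) ∧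
        ∀ x : X, ‖T x‖ ≤ ⨆ n, ‖u n x‖ :=
  terzioglu_isCompactOperator_iff_general T
end

section
/- Let X and Y be Banach spaces and T : X → Y a bounded linear operator. If there exists a sequence (u_n) in X* with ‖u_n‖ → 0 such that ‖Tx‖ ≤ sup_n |u_n(x)| for every x ∈ X, then T is compact. -/
open Filter

/-- If `T : X → Y` is a bounded linear operator between Banach spaces and there is a sequence
`(uₙ)` of continuous linear functionals on `X` with `‖uₙ‖ → 0` such that
`‖T x‖ ≤ sup_n |uₙ x|` for every `x ∈ X`, then `T` is compact. -/
theorem terzioglu_sufficiency {𝕜 X Y : Type*} [RCLike 𝕜]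
    [NormedAddCommGroup X] [NormedSpace 𝕜 X] [CompleteSpace X]
    [NormedAddCommGroup Y] [NormedSpace 𝕜 Y] [CompleteSpace Y]
    (T : X →L[𝕜] Y) (u : ℕ → (X →L[𝕜] 𝕜))
    (hu : Tendsto (fun n => ‖u n‖) atTop (nhds 0))
    (hTu : ∀ x : X, ‖T x‖ ≤ ⨆ n, ‖u n x‖) :
    IsCompactOperator T := by
  have tb : TotallyBounded (⇑T '' Metric.closedBall 0 1) := by
    rw [Metric.totallyBounded_iff]
    intro ε hε
    -- choose N with ‖u n‖ < ε/4 for n ≥ N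
    obtain ⟨N, hN⟩ := Metric.tendsto_atTop.1 hu (ε / 4) (by linarith)
    have hN' : ∀ n, N ≤ n → ‖u n‖ < ε / 4 := by
      intro n hn
      have := hN n hn
      rwa [Real.dist_eq, sub_zero, abs_of_nonneg (norm_nonneg _)] at this
    -- the finite-dimensional map
    set Φ : X →L[𝕜] (Fin N → 𝕜) := ContinuousLinearMap.pi (fun i => u i) with hΦ
    have tbΦ : TotallyBounded (⇑Φ '' Metric.closedBall 0 1) := by
      obtain ⟨C, hC⟩ :=
        ((Φ.lipschitz.isBounded_image Metric.isBounded_closedBall).subset_closedBall 0)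
      exact (isCompact_closedBall (0 : Fin N → 𝕜) C).totallyBounded.subset hC
    obtain ⟨t, hts, htf, htcov⟩ :=
      totallyBounded_iff_subset.1 tbΦ _ (Metric.dist_mem_uniformity (by linarith : (0:ℝ) < ε/4))
    have hpre : ∀ z ∈ t, ∃ w, w ∈ Metric.closedBall (0 : X) 1 ∧ Φ w = z := by
      intro z hz
      obtain ⟨w, hw, hwz⟩ := hts hz
      exact ⟨w, hw, hwz⟩
    choose f hf1 hf2 using hpre
    haveI : Fintype t := htf.fintype
    refine ⟨Set.range (fun z : t => T (f z z.2)), Set.finite_range _, ?_⟩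
    rintro y ⟨x, hx, rfl⟩
    obtain ⟨z, hz, hxz⟩ := Set.mem_iUnion₂.1 (htcov ⟨x, hx, rfl⟩)
    have hxz' : dist (Φ x) z < ε / 4 := hxz
    set w := f z hz with hw
    refine Set.mem_iUnion₂.2 ⟨T w, ⟨⟨z, hz⟩, rfl⟩, ?_⟩
    rw [Metric.mem_ball, dist_eq_norm, ← map_sub]
    have key : (⨆ n, ‖u n (x - w)‖) ≤ ε / 2 := by
      refine ciSup_le fun n => ?_
      rcases lt_or_ge n N with hn | hn
      · have : ‖u n (x - w)‖ = dist (Φ x ⟨n, hn⟩) (Φ w ⟨n, hn⟩) := by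
          simp [hΦ, dist_eq_norm, map_sub]
        rw [this]
        refine le_of_lt ?_
        calc dist (Φ x ⟨n, hn⟩) (Φ w ⟨n, hn⟩) ≤ dist (Φ x) (Φ w) := dist_le_pi_dist _ _ _
          _ = dist (Φ x) z := by rw [hf2 z hz]
          _ < ε / 4 := hxz'
          _ ≤ ε / 2 := by linarith
      · have hxw : ‖x - w‖ ≤ 2 := by
          have h1 : ‖x‖ ≤ 1 := by simpa using Metric.mem_closedBall.1 hx
          have h2 : ‖w‖ ≤ 1 := by simpa using Metric.mem_closedBall.1 (hf1 z hz)
          calc ‖x - w‖ ≤ ‖x‖ + ‖w‖ := norm_sub_le _ _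
            _ ≤ 2 := by linarith
        calc ‖u n (x - w)‖ ≤ ‖u n‖ * ‖x - w‖ := (u n).le_opNorm _
          _ ≤ (ε / 4) * 2 := by
              apply mul_le_mul (le_of_lt (hN' n hn)) hxw (norm_nonneg _) (by linarith)
          _ = ε / 2 := by ring
    calc ‖T (x - w)‖ ≤ ⨆ n, ‖u n (x - w)‖ := hTu _
      _ ≤ ε / 2 := key
      _ < ε := by linarith
  exact (isCompactOperator_iff_isCompact_closure_image_closedBall
    (T : X →ₗ[𝕜] Y) one_pos).mpr
    (TotallyBounded.isCompact_of_isClosed tb.closure isClosed_closure)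
end

section
/- Let Y be a 𝒫_λ-space. Then for every Banach space X, every compact linear operator T : X → Y is the limit in operator norm of a sequence of finite-rank bounded linear operators from X to Y. -/
open Filter

universe u v w

/-- A Banach space `Y` is a `𝒫_λ`-space if for all Banach spaces `W ⊆ Z` (via a linear isometric
embedding) every bounded operator `W → Y` extends to `Z` with norm at most `λ` times bigger. -/
def IsPLambdaSpace (𝕜 : Type*) [RCLike 𝕜] (Y : Type*) [NormedAddCommGroup Y]
    [NormedSpace 𝕜 Y] (lam : ℝ) : Prop :=
  ∀ (W : Type u) (Z : Type v) [NormedAddCommGroup W] [NormedSpace 𝕜 W] [CompleteSpace W]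
    [NormedAddCommGroup Z] [NormedSpace 𝕜 Z] [CompleteSpace Z]
    (i : W →ₗᵢ[𝕜] Z) (T : W →L[𝕜] Y),
    ∃ Ttilde : Z →L[𝕜] Y, (∀ w : W, Ttilde (i w) = T w) ∧ ‖Ttilde‖ ≤ lam * ‖T‖

/-!
Let `Y₀` be the closure of the range of the compact operator `T`. It is separable, so it embeds
isometrically into `ℓ^∞ = ℕ →ᵇ 𝕜` by a sequence of norming functionals; separability also makes
`Y₀` and `ℓ^∞` small, so the `𝒫_λ` property (stated for fixed universes) extends the inclusion
`Y₀ → Y` to an operator `R : ℓ^∞ → Y`. Hence `T = R ∘ J ∘ T₀` with `J ∘ T₀ : X → ℓ^∞` compact.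
On `ℓ^∞` a compact set is approximated uniformly by the finite-rank sampling operators
`z ↦ z ∘ σ`, where `σ : ℕ → ℕ` has finite range and identifies indices at which every function
of a finite net takes nearly the same value; composing with `R` preserves finite rank.
-/

open Metric Set TopologicalSpace BoundedContinuousFunction

instance RCLike.small {𝕜 : Type*} [RCLike 𝕜] : Small.{u} 𝕜 :=
  small_of_injective (f := fun z : 𝕜 => (RCLike.re z, RCLike.im z)) fun _ _ h =>
    RCLike.ext (congrArg Prod.fst h) (congrArg Prod.snd h)

instance BoundedContinuousFunction.small {𝕜 α : Type*} [RCLike 𝕜] [TopologicalSpace α]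
    [Countable α] : Small.{u} (α →ᵇ 𝕜) :=
  small_of_injective DFunLike.coe_injective

noncomputable def Shrink.linearIsometryEquiv (𝕜 W : Type*) [RCLike 𝕜] [NormedAddCommGroup W]
    [NormedSpace 𝕜 W] [Small.{u} W] : Shrink.{u} W ≃ₗᵢ[𝕜] W :=
  { Shrink.linearEquiv 𝕜 W with norm_map' := fun _ => rfl }

theorem IsPLambdaSpace.exists_extension {𝕜 Y : Type*} [RCLike 𝕜] [NormedAddCommGroup Y]
    [NormedSpace 𝕜 Y] {lam : ℝ} (hY : IsPLambdaSpace.{u, v} 𝕜 Y lam) {W Z : Type*}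
    [NormedAddCommGroup W] [NormedSpace 𝕜 W] [CompleteSpace W] [Small.{u} W]
    [NormedAddCommGroup Z] [NormedSpace 𝕜 Z] [CompleteSpace Z] [Small.{v} Z]
    (i : W →ₗᵢ[𝕜] Z) (T : W →L[𝕜] Y) :
    ∃ T' : Z →L[𝕜] Y, (∀ w, T' (i w) = T w) ∧ ‖T'‖ ≤ lam * ‖T‖ := by
  let eW := Shrink.linearIsometryEquiv.{u} 𝕜 W
  let eZ := Shrink.linearIsometryEquiv.{v} 𝕜 Z
  have := eW.toIsometryEquiv.completeSpace
  have := eZ.toIsometryEquiv.completeSpace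
  obtain ⟨r, hr, hr_norm⟩ := hY _ _ ((eZ.symm.toLinearIsometry.comp i).comp eW.toLinearIsometry)
    (T.comp (eW : Shrink.{u} W →L[𝕜] W))
  refine ⟨r.comp (eZ.symm : Z →L[𝕜] Shrink.{v} Z), fun w => ?_, ?_⟩
  · simpa using hr (eW.symm w)
  · rw [r.opNorm_comp_linearIsometryEquiv]
    simpa using hr_norm

section DiscreteIndex

variable {𝕜 α : Type*} [RCLike 𝕜] [TopologicalSpace α]

theorem BoundedContinuousFunction.exists_finiteDimensional_range_apply_eq [DiscreteTopology α]
    {ι : Type*} [Fintype ι] (φ : ι → α) (ψ : α → ι) :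
    ∃ P : (α →ᵇ 𝕜) →L[𝕜] (α →ᵇ 𝕜),
      FiniteDimensional 𝕜 (LinearMap.range (P : (α →ᵇ 𝕜) →ₗ[𝕜] (α →ᵇ 𝕜))) ∧
      ∀ z a, P z a = z (φ (ψ a)) := by
  let B : (ι → 𝕜) →ₗ[𝕜] (α →ᵇ 𝕜) :=
    { toFun := fun v => ofNormedAddCommGroupDiscrete (v ∘ ψ) ‖v‖ fun a => norm_le_pi_norm v (ψ a)
      map_add' := fun _ _ => by ext; simp
      map_smul' := fun _ _ => by ext; simp }
  let A : (α →ᵇ 𝕜) →L[𝕜] (ι → 𝕜) := ContinuousLinearMap.pi fun j => evalCLM 𝕜 (φ j)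
  exact ⟨(LinearMap.toContinuousLinearMap B).comp A,
    Submodule.finiteDimensional_of_le (LinearMap.range_comp_le_range (A : (α →ᵇ 𝕜) →ₗ[𝕜] _) B),
    fun _ _ => rfl⟩

theorem TotallyBounded.exists_finset_forall_dist_apply_lt {K : Set (α →ᵇ 𝕜)}
    (hK : TotallyBounded K) {ε : ℝ} (hε : 0 < ε) :
    ∃ (s : Finset α) (ψ : α → s), ∀ z ∈ K, ∀ a, dist (z (ψ a)) (z a) < ε := by
  classical
  obtain ⟨t, -, ht, hKt⟩ := finite_approx_of_totallyBounded hK (ε / 3) (by positivity)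
  have := ht.fintype
  let g : α → t → 𝕜 := fun a j => (j : α →ᵇ 𝕜) a
  have hg : TotallyBounded (range g) :=
    (isCompact_univ_pi fun j : t =>
      isCompact_closedBall (0 : 𝕜) ‖(j : α →ᵇ 𝕜)‖).totallyBounded.subset
      (range_subset_iff.2 fun a =>
        mem_univ_pi.2 fun j => mem_closedBall_zero_iff.2 (norm_coe_le_norm _ a))
  obtain ⟨u, hu_sub, hu, hgu⟩ := finite_approx_of_totallyBounded hg (ε / 3) (by positivity)
  obtain ⟨s, -, hs⟩ := Finset.subset_set_image_iff.1
    (show ↑hu.toFinset ⊆ g '' univ by simpa [image_univ] using hu_sub)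
  have hψ : ∀ a, ∃ b : s, dist (g a) (g b) < ε / 3 := by
    intro a
    obtain ⟨y, hy, hay⟩ := mem_iUnion₂.1 (hgu (mem_range_self a))
    obtain ⟨b, hb, rfl⟩ := Finset.mem_image.1 (hs ▸ hu.mem_toFinset.2 hy)
    exact ⟨⟨b, hb⟩, hay⟩
  choose ψ hψ using hψ
  refine ⟨s, ψ, fun z hz a => ?_⟩
  obtain ⟨w, hw, hzw⟩ := mem_iUnion₂.1 (hKt hz)
  calc dist (z (ψ a)) (z a)
        ≤ dist (z (ψ a)) (w (ψ a)) + dist (w (ψ a)) (w a) + dist (w a) (z a) :=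
        dist_triangle4 _ _ _ _
    _ < ε / 3 + ε / 3 + ε / 3 := by
        gcongr
        · exact (dist_coe_le_dist _).trans_lt hzw
        · rw [dist_comm]; exact (dist_le_pi_dist (g a) (g (ψ a)) ⟨w, hw⟩).trans_lt (hψ a)
        · rw [dist_comm]; exact (dist_coe_le_dist _).trans_lt hzw
    _ = ε := by ring

theorem BoundedContinuousFunction.exists_finiteDimensional_range_norm_sub_le [DiscreteTopology α]
    {K : Set (α →ᵇ 𝕜)} (hK : TotallyBounded K) {ε : ℝ} (hε : 0 < ε) :
    ∃ P : (α →ᵇ 𝕜) →L[𝕜] (α →ᵇ 𝕜),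
      FiniteDimensional 𝕜 (LinearMap.range (P : (α →ᵇ 𝕜) →ₗ[𝕜] (α →ᵇ 𝕜))) ∧
      ∀ z ∈ K, ‖P z - z‖ ≤ ε := by
  obtain ⟨s, ψ, hψ⟩ := hK.exists_finset_forall_dist_apply_lt hε
  obtain ⟨P, hP, hP_apply⟩ :=
    exists_finiteDimensional_range_apply_eq (𝕜 := 𝕜) ((↑) : s → α) ψ
  refine ⟨P, hP, fun z hz => (norm_le hε.le).2 fun a => ?_⟩
  rw [coe_sub, Pi.sub_apply, hP_apply, ← dist_eq_norm]
  exact (hψ z hz a).le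

end DiscreteIndex

def ContinuousLinearMap.finiteRank (𝕜 X Y : Type*) [RCLike 𝕜] [NormedAddCommGroup X]
    [NormedSpace 𝕜 X] [NormedAddCommGroup Y] [NormedSpace 𝕜 Y] : Set (X →L[𝕜] Y) :=
  {F | FiniteDimensional 𝕜 (LinearMap.range (F : X →ₗ[𝕜] Y))}

section FiniteRank

variable {𝕜 X Y Z : Type*} [RCLike 𝕜] [NormedAddCommGroup X] [NormedSpace 𝕜 X]
  [NormedAddCommGroup Y] [NormedSpace 𝕜 Y] [NormedAddCommGroup Z] [NormedSpace 𝕜 Z]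

namespace ContinuousLinearMap

theorem comp_mem_finiteRank (R : Y →L[𝕜] Z) {F : X →L[𝕜] Y} (hF : F ∈ finiteRank 𝕜 X Y) :
    R.comp F ∈ finiteRank 𝕜 X Z := by
  have : FiniteDimensional 𝕜 (LinearMap.range (F : X →ₗ[𝕜] Y)) := hF
  change FiniteDimensional 𝕜 (LinearMap.range ((R : Y →ₗ[𝕜] Z) ∘ₗ (F : X →ₗ[𝕜] Y)))
  rw [LinearMap.range_comp]
  infer_instance

theorem comp_mem_finiteRank_of_mem {P : Y →L[𝕜] Z} (hP : P ∈ finiteRank 𝕜 Y Z) (S : X →L[𝕜] Y) :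
    P.comp S ∈ finiteRank 𝕜 X Z :=
  have : FiniteDimensional 𝕜 (LinearMap.range (P : Y →ₗ[𝕜] Z)) := hP
  Submodule.finiteDimensional_of_le
    (LinearMap.range_comp_le_range (S : X →ₗ[𝕜] Y) (P : Y →ₗ[𝕜] Z))

theorem comp_mem_closure_finiteRank (R : Y →L[𝕜] Z) {T : X →L[𝕜] Y}
    (hT : T ∈ closure (finiteRank 𝕜 X Y)) : R.comp T ∈ closure (finiteRank 𝕜 X Z) :=
  map_mem_closure (compL 𝕜 X Y Z R).continuous hT fun _ => R.comp_mem_finiteRank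

end ContinuousLinearMap

theorem IsCompactOperator.mem_closure_finiteRank {α : Type*} [TopologicalSpace α]
    [DiscreteTopology α] {S : X →L[𝕜] (α →ᵇ 𝕜)} (hS : IsCompactOperator S) :
    S ∈ closure (ContinuousLinearMap.finiteRank 𝕜 X (α →ᵇ 𝕜)) := by
  refine Metric.mem_closure_iff.2 fun ε hε => ?_
  have hK : TotallyBounded (S '' closedBall 0 1) :=
    ((hS : IsCompactOperator (S : X →ₗ[𝕜] (α →ᵇ 𝕜))).isCompact_closure_image_closedBall
      1).totallyBounded.subset subset_closure
  obtain ⟨P, hP, hPK⟩ := exists_finiteDimensional_range_norm_sub_le hK (half_pos hε)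
  refine ⟨P.comp S, ContinuousLinearMap.comp_mem_finiteRank_of_mem hP S, ?_⟩
  rw [dist_eq_norm]
  refine ((S - P.comp S).opNorm_le_of_unit_norm (half_pos hε).le fun x hx => ?_).trans_lt
    (half_lt_self hε)
  rw [_root_.sub_apply, ContinuousLinearMap.comp_apply, norm_sub_rev]
  exact hPK _ (mem_image_of_mem S (mem_closedBall_zero_iff.2 hx.le))

end FiniteRank

section Separable

variable {𝕜 X Y : Type*} [RCLike 𝕜] [NormedAddCommGroup X] [NormedSpace 𝕜 X]
  [NormedAddCommGroup Y] [NormedSpace 𝕜 Y]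

theorem IsCompactOperator.isSeparable_range {T : X →ₗ[𝕜] Y} (hT : IsCompactOperator T) :
    IsSeparable (range T) := by
  rw [← image_univ, ← iUnion_closedBall_nat (0 : X), image_iUnion]
  exact .iUnion fun n => (hT.isCompact_closure_image_closedBall n).isSeparable.mono subset_closure

variable (𝕜 X) in
theorem exists_linearIsometry_boundedContinuousFunction_nat [SeparableSpace X] :
    Nonempty (X →ₗᵢ[𝕜] (ℕ →ᵇ 𝕜)) := by
  obtain ⟨u, hu⟩ := exists_dense_seq X
  choose f hf_norm hf_apply using fun n => exists_dual_vector'' 𝕜 (u n)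
  have hf_le (n : ℕ) (x : X) : ‖f n x‖ ≤ ‖x‖ := by
    simpa using (f n).le_of_opNorm_le (hf_norm n) x
  let L : X →L[𝕜] (ℕ →ᵇ 𝕜) := LinearMap.mkContinuous
    { toFun := fun x => ofNormedAddCommGroupDiscrete (f · x) ‖x‖ (hf_le · x)
      map_add' := fun _ _ => by ext; simp
      map_smul' := fun _ _ => by ext; simp }
    1 fun x => by simpa using (norm_le (norm_nonneg x)).2 (hf_le · x)
  refine ⟨⟨L, fun x => le_antisymm ((norm_le (norm_nonneg x)).2 (hf_le · x)) ?_⟩⟩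
  -- `‖x‖ ≤ ‖L x‖` is a closed condition, and `f n` norms `u n`.
  refine hu.induction_on x (isClosed_le continuous_norm (continuous_norm.comp L.continuous))
    fun n => ?_
  calc ‖u n‖ = ‖f n (u n)‖ := by rw [hf_apply, RCLike.norm_ofReal, abs_norm]
    _ ≤ ‖L (u n)‖ := (L (u n)).norm_coe_le_norm n

end Separable

theorem PLambda_approximation_property_general {𝕜 Y : Type*} [RCLike 𝕜]
    [NormedAddCommGroup Y] [NormedSpace 𝕜 Y] [CompleteSpace Y]
    (lam : ℝ) (hY : IsPLambdaSpace.{u, v} 𝕜 Y lam)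
    (X : Type w) [NormedAddCommGroup X] [NormedSpace 𝕜 X]
    (T : X →L[𝕜] Y) (hT : IsCompactOperator T) :
    ∃ F : ℕ → X →L[𝕜] Y,
      (∀ n, FiniteDimensional 𝕜 (LinearMap.range (F n : X →ₗ[𝕜] Y))) ∧
      Tendsto F atTop (nhds T) := by
  let Y₀ := (LinearMap.range (T : X →ₗ[𝕜] Y)).topologicalClosure
  have hY₀ : IsClosed (Y₀ : Set Y) := Submodule.isClosed_topologicalClosure _
  have : CompleteSpace Y₀ := hY₀.completeSpace_coe
  have : SeparableSpace Y₀ := by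
    refine IsSeparable.separableSpace ?_
    rw [Submodule.topologicalClosure_coe]
    exact (IsCompactOperator.isSeparable_range (T := (T : X →ₗ[𝕜] Y)) hT).closure
  obtain ⟨J⟩ := exists_linearIsometry_boundedContinuousFunction_nat 𝕜 Y₀
  have : Small.{u} Y₀ := small_of_injective J.injective
  obtain ⟨R, hR, -⟩ := hY.exists_extension J Y₀.subtypeL
  let T₀ : X →L[𝕜] Y₀ := T.codRestrict Y₀ fun x =>
    Submodule.le_topologicalClosure _ (LinearMap.mem_range_self _ x)
  have hRT : R.comp (J.toContinuousLinearMap.comp T₀) = T := by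
    ext x; exact hR (T₀ x)
  have hJT : IsCompactOperator (J.toContinuousLinearMap.comp T₀) :=
    (hT.codRestrict _ hY₀).clm_comp J.toContinuousLinearMap
  exact mem_closure_iff_seq_limit.1
    (hRT ▸ R.comp_mem_closure_finiteRank hJT.mem_closure_finiteRank)

/-- Every `𝒫_λ`-space has the approximation property: every compact operator from a Banach
space `X` into a `𝒫_λ`-space `Y` is an operator-norm limit of finite-rank operators. -/
theorem PLambda_approximation_property {𝕜 Y : Type*} [RCLike 𝕜]
    [NormedAddCommGroup Y] [NormedSpace 𝕜 Y] [CompleteSpace Y]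
    (lam : ℝ) (hlam : 1 ≤ lam) (hY : IsPLambdaSpace.{u, v} 𝕜 Y lam)
    (X : Type w) [NormedAddCommGroup X] [NormedSpace 𝕜 X] [CompleteSpace X]
    (T : X →L[𝕜] Y) (hT : IsCompactOperator T) :
    ∃ F : ℕ → X →L[𝕜] Y,
      (∀ n, FiniteDimensional 𝕜 (LinearMap.range (F n : X →ₗ[𝕜] Y))) ∧
      Tendsto F atTop (nhds T) :=
  PLambda_approximation_property_general lam hY X T hT
end

section
/- Let T be a compact linear operator from an infinite-dimensional Banach space X into a Banach space Y. Then there exists an infinite-dimensional closed linear subspace M of X such that the restriction of T to M, viewed as a bounded linear operator from M into Y, is infinite-nuclear. -/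
open Filter

/-- An operator `T : X → Y` is infinite-nuclear if `T x = Σₙ uₙ(x) yₙ` for some sequences `(uₙ)`
in `X*` with `‖uₙ‖ → 0` and `(yₙ)` in `Y` with `sup_{‖v‖ ≤ 1} Σₙ |v(yₙ)| < ∞`. -/
def InfiniteNuclear {𝕜 X Y : Type*} [RCLike 𝕜]
    [NormedAddCommGroup X] [NormedSpace 𝕜 X]
    [NormedAddCommGroup Y] [NormedSpace 𝕜 Y] (T : X →L[𝕜] Y) : Prop :=
  ∃ (u : ℕ → X →L[𝕜] 𝕜) (y : ℕ → Y),
    Tendsto (fun n => ‖u n‖) atTop (nhds 0) ∧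
    (∃ C : ℝ, ∀ v : Y →L[𝕜] 𝕜, ‖v‖ ≤ 1 →
      Summable (fun n => ‖v (y n)‖) ∧ (∑' n, ‖v (y n)‖) ≤ C) ∧
    (∀ x : X, HasSum (fun n => u n x • y n) (T x))

/-!
Compactness of `T` yields, in every infinite-dimensional subspace, unit vectors with arbitrarily
small image. Choosing each `xₙ` in the kernels of norming functionals `φₖ` of the earlier `xₖ`
gives a triangular system, which a Gram–Schmidt type recursion turns into a biorthogonal system
`(xₙ, gₙ)` with `‖gₙ‖ ≤ 2ⁿ`. With `‖T xₙ‖ ≤ 8⁻ⁿ` the series `Σ gₙ(·) T xₙ` converges in operator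
norm and agrees with `T` at every `xₙ`, hence on the closed span `M` of the `xₙ`; moving a factor
`4ⁿ` from `gₙ` to `T xₙ` makes it an infinite-nuclear representation of `T` on `M`.
-/

open Topology

section FiniteDimensional

variable {K V W : Type*} [DivisionRing K] [AddCommGroup V] [Module K V] [AddCommGroup W]
  [Module K W]

theorem LinearMap.not_finiteDimensional_ker [FiniteDimensional K W]
    (hV : ¬ FiniteDimensional K V) (f : V →ₗ[K] W) : ¬ FiniteDimensional K (LinearMap.ker f) := by
  intro hker
  have hcomap : FiniteDimensional K (Submodule.comap f ⊤) := inferInstance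
  rw [Submodule.comap_top] at hcomap
  exact hV Submodule.topEquiv.finiteDimensional

theorem LinearIndependent.not_finiteDimensional_of_range_subset {ι : Type*} [Infinite ι]
    {v : ι → V} (hv : LinearIndependent K v) {M : Submodule K V} (hM : Set.range v ⊆ M) :
    ¬ FiniteDimensional K M := fun _ =>
  Module.Finite.not_linearIndependent_of_infinite (fun i => (⟨v i, hM ⟨i, rfl⟩⟩ : M))
    (.of_comp M.subtype hv)

end FiniteDimensional

section Biorthogonal

variable {𝕜 E Y : Type*} [NontriviallyNormedField 𝕜] [NormedAddCommGroup E] [NormedSpace 𝕜 E]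
  [NormedAddCommGroup Y] [NormedSpace 𝕜 Y]

noncomputable def biorthogonalSeq (x : ℕ → E) (φ : ℕ → StrongDual 𝕜 E) : ℕ → StrongDual 𝕜 E
  | n => φ n - ∑ k : Fin n, φ n (x k) • biorthogonalSeq x φ k

variable {x : ℕ → E} {φ : ℕ → StrongDual 𝕜 E}

theorem biorthogonalSeq_apply (h_diag : ∀ n, φ n (x n) = 1)
    (h_tri : ∀ j k, j < k → φ j (x k) = 0) (j k : ℕ) :
    biorthogonalSeq x φ j (x k) = if j = k then 1 else 0 := by
  induction j using Nat.strong_induction_on generalizing k with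
  | _ j ih =>
    have hsum : ∑ i : Fin j, φ j (x i) * biorthogonalSeq x φ i (x k) =
        if k < j then φ j (x k) else 0 := by
      simp only [fun i : Fin j => ih i i.isLt k, mul_ite, mul_one, mul_zero]
      rw [Fin.sum_univ_eq_sum_range (fun i => if i = k then φ j (x i) else 0),
        Finset.sum_ite_eq']
      simp only [Finset.mem_range]
    rw [biorthogonalSeq]
    simp only [sub_apply, FunLike.coe_sum, Finset.sum_apply, smul_apply, smul_eq_mul, hsum]
    rcases lt_trichotomy j k with h | rfl | h
    · simp [h_tri j k h, h.ne, h.not_gt]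
    · simp [h_diag]
    · simp [h, h.ne']

theorem norm_biorthogonalSeq_le (hx : ∀ n, ‖x n‖ ≤ 1) (hφ : ∀ n, ‖φ n‖ ≤ 1) (n : ℕ) :
    ‖biorthogonalSeq x φ n‖ ≤ 2 ^ n := by
  induction n using Nat.strong_induction_on with
  | _ n ih =>
    rw [biorthogonalSeq]
    calc ‖φ n - ∑ k : Fin n, φ n (x k) • biorthogonalSeq x φ k‖
        ≤ 1 + ∑ k : Fin n, (2 : ℝ) ^ (k : ℕ) := by
          refine (norm_sub_le _ _).trans (add_le_add (hφ n) ((norm_sum_le _ _).trans ?_))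
          refine Finset.sum_le_sum fun k _ => ?_
          have hφx : ‖φ n (x k)‖ ≤ 1 :=
            ((φ n).le_opNorm _).trans (mul_le_one₀ (hφ n) (norm_nonneg _) (hx k))
          rw [norm_smul]
          exact (mul_le_mul hφx (ih k k.isLt) (norm_nonneg _) zero_le_one).trans_eq (one_mul _)
      _ = 2 ^ n := by
          rw [Fin.sum_univ_eq_sum_range (fun k => (2 : ℝ) ^ k), geom_sum_eq (by norm_num)]
          ring

theorem hasSum_apply_of_mem_topologicalClosure_span [CompleteSpace Y] {g : ℕ → StrongDual 𝕜 E}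
    (hg : ∀ j k, g j (x k) = if j = k then 1 else 0) {T : E →L[𝕜] Y}
    (hsum : Summable fun n => ‖g n‖ * ‖T (x n)‖) {z : E}
    (hz : z ∈ (Submodule.span 𝕜 (Set.range x)).topologicalClosure) :
    HasSum (fun n => g n z • T (x n)) (T z) := by
  obtain ⟨S, hS⟩ : Summable fun n => (g n).smulRight (T (x n)) :=
    Summable.of_norm (by simpa only [ContinuousLinearMap.norm_smulRight_apply] using hsum)
  have hS_apply : ∀ w, HasSum (fun n => g n w • T (x n)) (S w) := fun w =>
    hS.mapL (ContinuousLinearMap.apply 𝕜 Y w)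
  have hT_eq : Set.EqOn T S (Set.range x) := by
    rintro _ ⟨m, rfl⟩
    have h := hasSum_single (f := fun n => g n (x m) • T (x n)) m fun n hn => by simp [hg n m, hn]
    simpa [hg m m] using h.unique (hS_apply (x m))
  rw [← SetLike.mem_coe, Submodule.topologicalClosure_coe] at hz
  rw [ContinuousLinearMap.eqOn_closure_span hT_eq hz]
  exact hS_apply z

end Biorthogonal

section RCLike

variable {𝕜 X Y : Type*} [RCLike 𝕜] [NormedAddCommGroup X] [NormedSpace 𝕜 X]
  [NormedAddCommGroup Y] [NormedSpace 𝕜 Y]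

theorem IsCompactOperator.exists_norm_eq_one_norm_apply_le (hX : ¬ FiniteDimensional 𝕜 X)
    {T : X →L[𝕜] Y} (hT : IsCompactOperator T) {δ : ℝ} (hδ : 0 < δ) :
    ∃ w, ‖w‖ = 1 ∧ ‖T w‖ ≤ δ := by
  obtain ⟨R, z, -, hzR, hz⟩ := exists_seq_norm_le_one_le_norm_sub hX
  have hmem : ∀ n, T (z n) ∈ closure ((T : X →ₗ[𝕜] Y) '' Metric.closedBall 0 R) := fun n =>
    subset_closure ⟨z n, mem_closedBall_zero_iff.2 (hzR n), rfl⟩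
  obtain ⟨_, -, ψ, hψ, hconv⟩ :=
    (IsCompactOperator.isCompact_closure_image_closedBall hT R).tendsto_subseq hmem
  obtain ⟨N, hN⟩ := Metric.cauchySeq_iff'.1 hconv.cauchySeq δ hδ
  set d := z (ψ (N + 1)) - z (ψ N)
  have hd : 1 ≤ ‖d‖ := hz (hψ N.lt_succ_self).ne'
  have hd0 : d ≠ 0 := norm_pos_iff.1 (one_pos.trans_le hd)
  refine ⟨(‖d‖⁻¹ : 𝕜) • d, norm_smul_inv_norm hd0, ?_⟩
  have hTd : ‖T d‖ < δ := by simpa [d, dist_eq_norm] using hN (N + 1) N.le_succ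
  calc ‖T ((‖d‖⁻¹ : 𝕜) • d)‖ = ‖d‖⁻¹ * ‖T d‖ := by simp [norm_smul]
    _ ≤ ‖T d‖ := mul_le_of_le_one_left (norm_nonneg _) (inv_le_one_of_one_le₀ hd)
    _ ≤ δ := hTd.le

theorem IsCompactOperator.exists_triangular_seq_norm_apply_le (hX : ¬ FiniteDimensional 𝕜 X)
    {T : X →L[𝕜] Y} (hT : IsCompactOperator T) {ε : ℕ → ℝ} (hε : ∀ n, 0 < ε n)
    (hε_anti : Antitone ε) :
    ∃ (x : ℕ → X) (φ : ℕ → StrongDual 𝕜 X), (∀ n, ‖x n‖ = 1) ∧ (∀ n, ‖φ n‖ ≤ 1) ∧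
      (∀ n, φ n (x n) = 1) ∧ (∀ j k, j < k → φ j (x k) = 0) ∧ ∀ n, ‖T (x n)‖ ≤ ε n := by
  -- The `ℕ` component is a label that strictly increases along the sequence, hence is at least
  -- the position; this is how `ε` gets attached to positions.
  let P : ℕ × X × StrongDual 𝕜 X → Prop := fun p =>
    ‖p.2.1‖ = 1 ∧ ‖p.2.2‖ ≤ 1 ∧ p.2.2 p.2.1 = 1 ∧ ‖T p.2.1‖ ≤ ε p.1
  let r : ℕ × X × StrongDual 𝕜 X → ℕ × X × StrongDual 𝕜 X → Prop := fun p q =>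
    p.1 < q.1 ∧ p.2.2 q.2.1 = 0
  obtain ⟨F, hP, hr⟩ := exists_seq_of_forall_finset_exists P r fun s _ => by
    let Z := LinearMap.ker (LinearMap.pi fun p : s => (p.1.2.2 : X →ₗ[𝕜] 𝕜))
    set k := s.sup Prod.fst + 1
    obtain ⟨w, hw, hTw⟩ := IsCompactOperator.exists_norm_eq_one_norm_apply_le
      (LinearMap.not_finiteDimensional_ker hX _) (T := T.comp Z.subtypeL)
      (hT.comp_clm Z.subtypeL) (hε k)
    obtain ⟨ψ, hψ, hψw⟩ := exists_dual_vector'' 𝕜 (w : X)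
    refine ⟨(k, w, ψ), ⟨hw, hψ, ?_, hTw⟩, fun p hp => ⟨?_, ?_⟩⟩
    · rw [hψw, show ‖(w : X)‖ = 1 from hw, RCLike.ofReal_one]
    · exact Nat.lt_succ_of_le (Finset.le_sup (f := Prod.fst) hp)
    · exact congrFun (LinearMap.mem_ker.1 w.2) ⟨p, hp⟩
  have hmono : StrictMono fun n => (F n).1 := fun m n h => (hr m n h).1
  exact ⟨fun n => (F n).2.1, fun n => (F n).2.2, fun n => (hP n).1, fun n => (hP n).2.1,
    fun n => (hP n).2.2.1, fun j k h => (hr j k h).2,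
    fun n => (hP n).2.2.2.trans (hε_anti (hmono.id_le n))⟩

theorem InfiniteNuclear.of_summable_norm {T : X →L[𝕜] Y} (u : ℕ → StrongDual 𝕜 X) (y : ℕ → Y)
    (hu : Tendsto (fun n => ‖u n‖) atTop (𝓝 0)) (hy : Summable fun n => ‖y n‖)
    (hT : ∀ x, HasSum (fun n => u n x • y n) (T x)) : InfiniteNuclear T := by
  refine ⟨u, y, hu, ⟨∑' n, ‖y n‖, fun v hv => ?_⟩, hT⟩
  have hvy : ∀ n, ‖v (y n)‖ ≤ ‖y n‖ := fun n =>
    (v.le_opNorm _).trans (mul_le_of_le_one_left (norm_nonneg _) hv)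
  have hsum : Summable fun n => ‖v (y n)‖ := hy.of_nonneg_of_le (fun _ => norm_nonneg _) hvy
  exact ⟨hsum, hsum.tsum_le_tsum hvy hy⟩

theorem InfiniteNuclear.of_norm_le_two_pow {T : X →L[𝕜] Y} (u : ℕ → StrongDual 𝕜 X)
    (y : ℕ → Y) (hu : ∀ n, ‖u n‖ ≤ 2 ^ n) (hy : ∀ n, ‖y n‖ ≤ 8⁻¹ ^ n)
    (hT : ∀ x, HasSum (fun n => u n x • y n) (T x)) : InfiniteNuclear T := by
  have h4 : ∀ n, ‖(4 : 𝕜) ^ n‖ = 4 ^ n := fun n => by simp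
  refine .of_summable_norm (fun n => ((4 : 𝕜) ^ n)⁻¹ • u n) (fun n => (4 : 𝕜) ^ n • y n)
    (squeeze_zero (fun _ => norm_nonneg _) (fun n => ?_)
      (tendsto_pow_atTop_nhds_zero_of_lt_one (r := (2 : ℝ)⁻¹) (by norm_num) (by norm_num)))
    (.of_nonneg_of_le (fun _ => norm_nonneg _) (fun n => ?_)
      (summable_geometric_of_lt_one (r := (2 : ℝ)⁻¹) (by norm_num) (by norm_num)))
    fun x => ?_
  · rw [norm_smul, norm_inv, h4]
    calc (4 ^ n)⁻¹ * ‖u n‖ ≤ (4 ^ n)⁻¹ * 2 ^ n := by gcongr; exact hu n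
      _ = 2⁻¹ ^ n := by rw [← inv_pow, ← mul_pow]; norm_num
  · rw [norm_smul, h4]
    calc 4 ^ n * ‖y n‖ ≤ 4 ^ n * 8⁻¹ ^ n := by gcongr; exact hy n
      _ = 2⁻¹ ^ n := by rw [← mul_pow]; norm_num
  · convert hT x using 2 with n
    simp only [smul_apply, smul_eq_mul, smul_smul]
    field_simp

end RCLike

theorem compact_restriction_infiniteNuclear_general {𝕜 X Y : Type*} [RCLike 𝕜]
    [NormedAddCommGroup X] [NormedSpace 𝕜 X]
    [NormedAddCommGroup Y] [NormedSpace 𝕜 Y] [CompleteSpace Y]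
    (T : X →L[𝕜] Y) (hT : IsCompactOperator T) (hX : ¬ FiniteDimensional 𝕜 X) :
    ∃ M : Submodule 𝕜 X, IsClosed (M : Set X) ∧ ¬ FiniteDimensional 𝕜 M ∧
      InfiniteNuclear (T.comp M.subtypeL) := by
  obtain ⟨x, φ, hx, hφ, h_diag, h_tri, hTx⟩ :=
    hT.exists_triangular_seq_norm_apply_le hX (ε := fun n => 8⁻¹ ^ n) (fun n => by positivity)
      fun m n h => pow_le_pow_of_le_one (by norm_num) (by norm_num) h
  set g := biorthogonalSeq x φ
  have hg : ∀ j k, g j (x k) = if j = k then 1 else 0 := biorthogonalSeq_apply h_diag h_tri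
  have hg_norm : ∀ n, ‖g n‖ ≤ 2 ^ n := norm_biorthogonalSeq_le (fun n => (hx n).le) hφ
  have hsum : Summable fun n => ‖g n‖ * ‖T (x n)‖ := by
    refine .of_nonneg_of_le (fun n => by positivity) (fun n => ?_)
      (summable_geometric_of_lt_one (r := (4 : ℝ)⁻¹) (by norm_num) (by norm_num))
    calc ‖g n‖ * ‖T (x n)‖ ≤ 2 ^ n * 8⁻¹ ^ n := by gcongr; exacts [hg_norm n, hTx n]
      _ = 4⁻¹ ^ n := by rw [← mul_pow]; norm_num
  have hli : LinearIndependent 𝕜 x :=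
    .of_pairwise_dual_eq_zero_one x (fun n => g n) (fun j k h => by simp [hg, h])
      (fun n => by simp [hg])
  set S := Submodule.span 𝕜 (Set.range x)
  set M := S.topologicalClosure
  refine ⟨M, S.isClosed_topologicalClosure,
    hli.not_finiteDimensional_of_range_subset (Submodule.subset_span.trans S.le_topologicalClosure),
    .of_norm_le_two_pow (fun n => (g n).comp M.subtypeL) (fun n => T (x n)) (fun n => ?_) hTx
      fun z => hasSum_apply_of_mem_topologicalClosure_span hg hsum z.2⟩
  calc ‖(g n).comp M.subtypeL‖ ≤ ‖g n‖ * ‖M.subtypeL‖ := (g n).opNorm_comp_le _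
    _ ≤ ‖g n‖ := mul_le_of_le_one_right (norm_nonneg _) M.norm_subtypeL_le
    _ ≤ 2 ^ n := hg_norm n

/-- If `T` is a compact operator from an infinite-dimensional Banach space `X` into a Banach
space `Y`, then there is an infinite-dimensional closed subspace `M` of `X` such that the
restriction of `T` to `M` is infinite-nuclear. -/
theorem compact_restriction_infiniteNuclear {𝕜 X Y : Type*} [RCLike 𝕜]
    [NormedAddCommGroup X] [NormedSpace 𝕜 X] [CompleteSpace X]
    [NormedAddCommGroup Y] [NormedSpace 𝕜 Y] [CompleteSpace Y]
    (T : X →L[𝕜] Y) (hT : IsCompactOperator T) (hX : ¬ FiniteDimensional 𝕜 X) :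
    ∃ M : Submodule 𝕜 X, IsClosed (M : Set X) ∧ ¬ FiniteDimensional 𝕜 M ∧
      InfiniteNuclear (T.comp M.subtypeL) :=
  compact_restriction_infiniteNuclear_general T hT hX
end

section
/- A subset K of a Banach space X is relatively compact (i.e., has compact closure) if and only if there exists a sequence (x_n) in X with ‖x_n‖ → 0 such that K is contained in the closed convex hull of {x_n : n ∈ ℕ}. -/
/-!
Compact sets are totally bounded, so `K` has finite `4⁻ⁿ`-nets `Cₙ`. Every `k ∈ K` is the limit
of points `cₙ ∈ Cₙ`, hence the sum of the increments `c₀, c₁ - c₀, c₂ - c₁, …`, and the `n`-th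
increment ranges over a finite set of vectors of norm `O(4⁻ⁿ)`. Writing the `n`-th increment as
`2⁻ⁿ⁻¹ • (2ⁿ⁺¹ • increment)` exhibits `k` as a limit of sub-convex combinations of rescaled
increments, which still have norm `O(2⁻ⁿ)`; enumerating these countably many vectors gives a
null sequence whose closed convex hull contains `K` (and `0`).

Conversely, a null sequence together with `0` is compact, its convex hull is totally bounded,
and in a Banach space the closure of a totally bounded set is compact.
-/

open Filter Topology Set Pointwise

theorem Convex.sum_smul_mem_of_zero_mem {𝕜 E ι : Type*} [Field 𝕜] [LinearOrder 𝕜]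
    [IsStrictOrderedRing 𝕜] [AddCommGroup E] [Module 𝕜 E] {A : Set E} (hA : Convex 𝕜 A)
    (h0 : (0 : E) ∈ A) {s : Finset ι} {w : ι → 𝕜} {y : ι → E} (hw₀ : ∀ i ∈ s, 0 ≤ w i)
    (hw₁ : ∑ i ∈ s, w i ≤ 1) (hy : ∀ i ∈ s, y i ∈ A) : ∑ i ∈ s, w i • y i ∈ A := by
  rcases (Finset.sum_nonneg hw₀).eq_or_lt with hzero | hpos
  · rw [eq_comm, Finset.sum_eq_zero_iff_of_nonneg hw₀] at hzero
    rwa [Finset.sum_eq_zero fun i hi => by rw [hzero i hi, zero_smul]]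
  · have hmass := hA.smul_mem_of_zero_mem h0 (hA.centerMass_mem hw₀ hpos hy) ⟨hpos.le, hw₁⟩
    rwa [Finset.centerMass, smul_smul, mul_inv_cancel₀ hpos.ne', one_smul] at hmass

section NullSequence

variable {E : Type*} [SeminormedAddGroup E]

theorem finite_setOf_le_norm_iUnion {G : ℕ → Set E} (hG : ∀ n, (G n).Finite)
    (hsmall : ∀ ε > 0, ∀ᶠ n in atTop, ∀ v ∈ G n, ‖v‖ < ε) {ε : ℝ} (hε : 0 < ε) :
    {v ∈ ⋃ n, G n | ε ≤ ‖v‖}.Finite := by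
  obtain ⟨N, hN⟩ := eventually_atTop.1 (hsmall ε hε)
  refine (finite_iUnion fun n : Fin N => hG n).subset ?_
  rintro v ⟨hv, hεv⟩
  obtain ⟨n, hn⟩ := mem_iUnion.1 hv
  have hnN : n < N := by
    by_contra! h
    exact (hεv.trans_lt (hN n h v hn)).false
  exact mem_iUnion.2 ⟨⟨n, hnN⟩, hn⟩

/-- An injective enumeration, padded with zeros, takes each large value only once. -/
theorem exists_seq_tendsto_zero_superset {S : Set E} (hS : S.Countable)
    (hfin : ∀ ε > 0, {v ∈ S | ε ≤ ‖v‖}.Finite) :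
    ∃ x : ℕ → E, Tendsto (fun n => ‖x n‖) atTop (𝓝 0) ∧ S ⊆ range x := by
  have : Countable S := hS
  obtain ⟨j, hj⟩ := Countable.exists_injective_nat S
  refine ⟨Function.extend j Subtype.val 0, ?_, fun v hv => ⟨j ⟨v, hv⟩, hj.extend_apply _ _ _⟩⟩
  rw [← Nat.cofinite_eq_atTop, tendsto_order]
  refine ⟨fun a ha => .of_forall fun n => ha.trans_le (norm_nonneg _), fun ε hε => ?_⟩
  refine ((hfin ε hε).preimage Subtype.val_injective.injOn |>.image j).subset fun n hn => ?_
  by_cases hrange : ∃ v, j v = n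
  · obtain ⟨v, rfl⟩ := hrange
    refine ⟨v, ⟨v.2, ?_⟩, rfl⟩
    simpa [hj.extend_apply] using hn
  · simp [Function.extend_apply' _ _ _ hrange, hε] at hn

end NullSequence

theorem TotallyBounded.exists_finite_increments {E : Type*} [SeminormedAddCommGroup E]
    {K : Set E} (hK : TotallyBounded K) {ε : ℕ → ℝ} (hε : ∀ n, 0 < ε n)
    (hε₀ : Tendsto ε atTop (𝓝 0)) :
    ∃ F : ℕ → Set E, (∀ n, (F n).Finite) ∧ (∀ n, ∀ v ∈ F (n + 1), ‖v‖ < ε n + ε (n + 1)) ∧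
      ∀ k ∈ K, ∃ d : ℕ → E, (∀ n, d n ∈ F n) ∧
        Tendsto (fun N => ∑ i ∈ Finset.range N, d i) atTop (𝓝 k) := by
  choose C hC_fin hC_cover using fun n => Metric.totallyBounded_iff.1 hK (ε n) (hε n)
  let F : ℕ → Set E := fun
    | 0 => C 0
    | n + 1 => {v ∈ C (n + 1) - C n | ‖v‖ < ε n + ε (n + 1)}
  refine ⟨F, fun n => ?_, fun n v hv => hv.2, fun k hk => ?_⟩
  · cases n with
    | zero => exact hC_fin 0
    | succ n => exact ((hC_fin (n + 1)).sub (hC_fin n)).subset (sep_subset _ _)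
  · have hnear : ∀ n, ∃ y ∈ C n, dist k y < ε n := fun n => by
      simpa only [mem_iUnion₂, Metric.mem_ball, dist_comm k, exists_prop] using hC_cover n hk
    choose c hc_mem hc_dist using hnear
    let d : ℕ → E := fun
      | 0 => c 0
      | n + 1 => c (n + 1) - c n
    have hd : ∀ n, d n ∈ F n := fun
      | 0 => hc_mem 0
      | n + 1 => by
        refine ⟨sub_mem_sub (hc_mem (n + 1)) (hc_mem n), ?_⟩
        calc ‖c (n + 1) - c n‖ ≤ dist (c n) k + dist k (c (n + 1)) := by
              rw [← dist_eq_norm, dist_comm]; exact dist_triangle _ _ _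
          _ < ε n + ε (n + 1) := by
              rw [dist_comm]; exact add_lt_add (hc_dist n) (hc_dist (n + 1))
    have hpartial : ∀ N, ∑ i ∈ Finset.range (N + 1), d i = c N := fun N => by
      rw [Finset.sum_range_succ', Finset.sum_range_sub (f := c)]
      abel
    have hc_tendsto : Tendsto c atTop (𝓝 k) := by
      rw [tendsto_iff_dist_tendsto_zero]
      refine squeeze_zero (fun _ => dist_nonneg) (fun n => ?_) hε₀
      rw [dist_comm]; exact (hc_dist n).le
    refine ⟨d, hd, (tendsto_add_atTop_iff_nat 1).1 ?_⟩
    simpa only [hpartial] using hc_tendsto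

theorem exists_seq_tendsto_zero_subset_closure_convexHull {E : Type*}
    [SeminormedAddCommGroup E] [NormedSpace ℝ E] {K : Set E} (hK : TotallyBounded K) :
    ∃ x : ℕ → E, Tendsto (fun n => ‖x n‖) atTop (𝓝 0) ∧
      K ⊆ closure (convexHull ℝ (range x)) := by
  obtain ⟨F, hF_fin, hF_small, hF_sum⟩ := hK.exists_finite_increments
    (fun n => by positivity) (tendsto_pow_atTop_nhds_zero_of_lt_one (r := (1 / 4 : ℝ))
      (by norm_num) (by norm_num))
  let G : ℕ → Set E := fun n => (2 : ℝ) ^ (n + 1) • F n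
  have hG_fin : ∀ n, (G n).Finite := fun n => (hF_fin n).smul_set
  have hG_bound : ∀ n, ∀ v ∈ G (n + 1), ‖v‖ < 5 * (1 / 2 : ℝ) ^ n := by
    rintro n _ ⟨v, hv, rfl⟩
    calc ‖(2 : ℝ) ^ (n + 2) • v‖ = 2 ^ (n + 2) * ‖v‖ := by
          rw [norm_smul, Real.norm_of_nonneg (by positivity)]
      _ < 2 ^ (n + 2) * ((1 / 4) ^ n + (1 / 4) ^ (n + 1)) :=
          mul_lt_mul_of_pos_left (hF_small n v hv) (by positivity)
      _ = 5 * (2 * (1 / 4)) ^ n := by rw [mul_pow]; ring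
      _ = 5 * (1 / 2) ^ n := by norm_num
  have hG_small : ∀ ε > 0, ∀ᶠ n in atTop, ∀ v ∈ G n, ‖v‖ < ε := by
    intro ε hε
    have hlim : Tendsto (fun n => 5 * (1 / 2 : ℝ) ^ n) atTop (𝓝 0) := by
      simpa using (tendsto_pow_atTop_nhds_zero_of_lt_one (r := (1 / 2 : ℝ))
        (by norm_num) (by norm_num)).const_mul 5
    rw [← map_add_atTop_eq_nat 1, eventually_map]
    filter_upwards [hlim.eventually (gt_mem_nhds hε)] with n hn v hv
    exact (hG_bound n v hv).trans hn
  obtain ⟨x, hx, hGx⟩ := exists_seq_tendsto_zero_superset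
    (countable_iUnion fun n => (hG_fin n).countable)
    fun ε hε => finite_setOf_le_norm_iUnion hG_fin hG_small hε
  refine ⟨x, hx, fun k hk => ?_⟩
  obtain ⟨d, hdF, hd_sum⟩ := hF_sum k hk
  set A := closure (convexHull ℝ (range x))
  have hA_zero : (0 : E) ∈ A := mem_closure_of_tendsto (tendsto_zero_iff_norm_tendsto_zero.2 hx)
    (.of_forall fun n => subset_convexHull ℝ _ ⟨n, rfl⟩)
  have hA_G : ∀ n, (2 : ℝ) ^ (n + 1) • d n ∈ A := fun n =>
    subset_closure <| subset_convexHull ℝ _ <| hGx <| mem_iUnion.2 ⟨n, smul_mem_smul_set (hdF n)⟩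
  have hweights : ∀ N, ∑ i ∈ Finset.range N, (1 / 2 : ℝ) ^ (i + 1) ≤ 1 := fun N => by
    simp_rw [pow_succ, ← Finset.sum_mul]
    linarith [sum_geometric_two_le N]
  refine isClosed_closure.mem_of_tendsto hd_sum (.of_forall fun N => ?_)
  have hdyadic : ∑ i ∈ Finset.range N, d i =
      ∑ i ∈ Finset.range N, (1 / 2 : ℝ) ^ (i + 1) • (2 : ℝ) ^ (i + 1) • d i := by
    simp_rw [smul_smul, ← mul_pow]
    norm_num
  rw [hdyadic]
  exact (convex_convexHull ℝ _).closure.sum_smul_mem_of_zero_mem hA_zero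
    (fun i _ => by positivity) (hweights N) (fun i _ => hA_G i)

theorem isCompact_closure_convexHull_of_tendsto_zero {E : Type*} [NormedAddCommGroup E]
    [NormedSpace ℝ E] [CompleteSpace E] {x : ℕ → E} (hx : Tendsto x atTop (𝓝 0)) :
    IsCompact (closure (convexHull ℝ (range x))) :=
  (totallyBounded_convexHull.2 (hx.isCompact_insert_range.totallyBounded.subset
    (subset_insert _ _))).closure.isCompact_of_isClosed isClosed_closure

/-- **Grothendieck's theorem.** A subset `K` of a Banach space is relatively compact if and only
if it is contained in the closed convex hull of a sequence converging in norm to zero. -/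
theorem grothendieck_relatively_compact_iff {X : Type*} [NormedAddCommGroup X]
    [NormedSpace ℝ X] [CompleteSpace X] (K : Set X) :
    IsCompact (closure K) ↔
      ∃ x : ℕ → X, Tendsto (fun n => ‖x n‖) atTop (nhds 0) ∧
        K ⊆ closure (convexHull ℝ (Set.range x)) := by
  constructor
  · exact fun hK =>
      exists_seq_tendsto_zero_subset_closure_convexHull (hK.totallyBounded.subset subset_closure)
  · rintro ⟨x, hx, hKx⟩
    exact (isCompact_closure_convexHull_of_tendsto_zero
      (tendsto_zero_iff_norm_tendsto_zero.2 hx)).of_isClosed_subset isClosed_closure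
      (closure_minimal hKx isClosed_closure)
end

section
/- Let X be a Banach space and (x_n) a sequence in X with ‖x_n‖ → 0. Then the closed convex hull of {x_n : n ∈ ℕ} is contained in the set { Σ_{n=1}^∞ α_n x_n : (α_n) scalars with Σ_{n=1}^∞ |α_n| ≤ 1 } (all such series converging in norm). -/
/-!
The map `α ↦ ∑ αₙ xₙ` is affine on the set `K` of nonnegative sequences with `∑ αₙ ≤ 1`, and `K`
is compact for the topology of pointwise convergence (a closed subset of `[0,1]^ℕ`). Since
`‖xₙ‖ → 0`, the tails `∑_{n ≥ N} αₙ xₙ` are bounded by `sup_{n ≥ N} ‖xₙ‖` uniformly on `K`, so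
the map is a uniform limit of continuous partial sums and hence continuous on `K`. Its image is
therefore a compact, hence closed, convex set containing every `xₙ`, so it contains the closed
convex hull.
-/

open Filter

def subSimplex : Set (ℕ → ℝ) :=
  {α | (∀ n, 0 ≤ α n) ∧ ∀ s : Finset ℕ, ∑ n ∈ s, α n ≤ 1}

namespace subSimplex

variable {α : ℕ → ℝ}

theorem summable (hα : α ∈ subSimplex) : Summable α :=
  summable_of_sum_le hα.1 hα.2

theorem tsum_le_one (hα : α ∈ subSimplex) : ∑' n, α n ≤ 1 :=
  (summable hα).tsum_le_of_sum_le hα.2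

theorem shift_mem (hα : α ∈ subSimplex) (N : ℕ) : (fun n => α (n + N)) ∈ subSimplex :=
  ⟨fun n => hα.1 _, fun s => by
    simpa only [Finset.sum_map, addRightEmbedding_apply] using hα.2 (s.map (addRightEmbedding N))⟩

theorem single_mem (m : ℕ) : Pi.single m 1 ∈ subSimplex := by
  refine ⟨fun n => ?_, fun s => ?_⟩
  · by_cases h : n = m
    · subst h; simp
    · simp [h]
  · by_cases h : m ∈ s <;> simp [h]

theorem isClosed : IsClosed subSimplex := by
  simp only [subSimplex, Set.ofPred_and, Set.ofPred_forall]
  refine .inter (isClosed_iInter fun n => isClosed_le continuous_const (continuous_apply n))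
    (isClosed_iInter fun s => isClosed_le ?_ continuous_const)
  exact continuous_finsetSum s fun n _ => continuous_apply n

theorem subset_pi_Icc : subSimplex ⊆ Set.univ.pi fun _ => Set.Icc 0 1 :=
  fun α hα n _ => ⟨hα.1 n, by simpa using hα.2 {n}⟩

theorem isCompact : IsCompact subSimplex :=
  (isCompact_univ_pi fun _ => isCompact_Icc).of_isClosed_subset isClosed subset_pi_Icc

theorem convex : Convex ℝ subSimplex := by
  rintro α ⟨hα0, hα1⟩ β ⟨hβ0, hβ1⟩ a b ha hb hab
  refine ⟨fun n => add_nonneg (mul_nonneg ha (hα0 n)) (mul_nonneg hb (hβ0 n)), fun s => ?_⟩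
  simp only [Pi.add_apply, Pi.smul_apply, smul_eq_mul, Finset.sum_add_distrib, ← Finset.mul_sum]
  nlinarith [hα1 s, hβ1 s]

section

variable {X : Type*} [NormedAddCommGroup X] [NormedSpace ℝ X] {x : ℕ → X}

theorem summable_smul [CompleteSpace X] (hα : α ∈ subSimplex) {C : ℝ} (hC : ∀ n, ‖x n‖ ≤ C) :
    Summable fun n => α n • x n :=
  .of_norm_bounded ((summable hα).mul_right C) fun n => by
    rw [norm_smul, Real.norm_of_nonneg (hα.1 n)]
    exact mul_le_mul_of_nonneg_left (hC n) (hα.1 n)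

theorem norm_tsum_smul_le (hα : α ∈ subSimplex) {ε : ℝ} (hε : ∀ n, ‖x n‖ ≤ ε) :
    ‖∑' n, α n • x n‖ ≤ ε := by
  have hε0 : 0 ≤ ε := (norm_nonneg _).trans (hε 0)
  calc ‖∑' n, α n • x n‖ ≤ (∑' n, α n) * ε :=
        tsum_of_norm_bounded ((summable hα).hasSum.mul_right ε) fun n => by
          rw [norm_smul, Real.norm_of_nonneg (hα.1 n)]
          exact mul_le_mul_of_nonneg_left (hε n) (hα.1 n)
    _ ≤ ε := mul_le_of_le_one_left hε0 (tsum_le_one hα)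

theorem tendstoUniformlyOn_sum_range_smul [CompleteSpace X]
    (hx : Tendsto (fun n => ‖x n‖) atTop (nhds 0)) :
    TendstoUniformlyOn (fun N (α : ℕ → ℝ) => ∑ n ∈ Finset.range N, α n • x n)
      (fun α => ∑' n, α n • x n) atTop subSimplex := by
  obtain ⟨C, hC⟩ := hx.bddAbove_range
  rw [Metric.tendstoUniformlyOn_iff]
  intro ε hε
  obtain ⟨N₀, hN₀⟩ := eventually_atTop.mp (hx.eventually (ge_mem_nhds (half_pos hε)))
  filter_upwards [eventually_ge_atTop N₀] with N hN α hα
  have hsplit := (summable_smul hα fun n => hC ⟨n, rfl⟩).sum_add_tsum_nat_add N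
  rw [dist_eq_norm, ← hsplit, add_sub_cancel_left]
  exact (norm_tsum_smul_le (shift_mem hα N) fun n => hN₀ _ (by omega)).trans_lt (half_lt_self hε)

theorem continuousOn_tsum_smul [CompleteSpace X]
    (hx : Tendsto (fun n => ‖x n‖) atTop (nhds 0)) :
    ContinuousOn (fun α : ℕ → ℝ => ∑' n, α n • x n) subSimplex :=
  (tendstoUniformlyOn_sum_range_smul hx).continuousOn <| Frequently.of_forall fun _ =>
    (continuous_finsetSum _ fun n _ => (continuous_apply n).smul continuous_const).continuousOn

theorem convex_image_tsum_smul [CompleteSpace X] {C : ℝ} (hC : ∀ n, ‖x n‖ ≤ C) :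
    Convex ℝ ((fun α : ℕ → ℝ => ∑' n, α n • x n) '' subSimplex) := by
  rintro _ ⟨α, hα, rfl⟩ _ ⟨β, hβ, rfl⟩ a b ha hb hab
  refine ⟨a • α + b • β, convex hα hβ ha hb hab, ?_⟩
  simp only [Pi.add_apply, Pi.smul_apply, smul_eq_mul, add_smul, mul_smul]
  rw [((summable_smul hα hC).const_smul a).tsum_add ((summable_smul hβ hC).const_smul b),
    (summable_smul hα hC).tsum_const_smul, (summable_smul hβ hC).tsum_const_smul]

theorem closure_convexHull_subset_image [CompleteSpace X]
    (hx : Tendsto (fun n => ‖x n‖) atTop (nhds 0)) :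
    closure (convexHull ℝ (Set.range x)) ⊆
      (fun α : ℕ → ℝ => ∑' n, α n • x n) '' subSimplex := by
  obtain ⟨C, hC⟩ := hx.bddAbove_range
  refine closure_minimal (convexHull_min ?_ (convex_image_tsum_smul fun n => hC ⟨n, rfl⟩))
    (isCompact.image_of_continuousOn (continuousOn_tsum_smul hx)).isClosed
  rintro _ ⟨m, rfl⟩
  refine ⟨Pi.single m 1, single_mem m, ?_⟩
  change ∑' n, _ = _
  rw [tsum_eq_single m fun n hn => by simp [hn]]
  simp

end

end subSimplex

/-- If `(xₙ)` is a null sequence in a Banach space `X` (over `ℝ` or `ℂ`), then the closed convex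
hull of `{xₙ : n ∈ ℕ}` is contained in the set of all sums `Σₙ αₙ xₙ` with scalars `(αₙ)`
satisfying `Σₙ |αₙ| ≤ 1`. -/
theorem closedConvexHull_subset_sums {𝕜 X : Type*} [RCLike 𝕜]
    [NormedAddCommGroup X] [NormedSpace ℝ X] [NormedSpace 𝕜 X] [IsScalarTower ℝ 𝕜 X]
    [CompleteSpace X]
    (x : ℕ → X) (hx : Tendsto (fun n => ‖x n‖) atTop (nhds 0)) :
    closure (convexHull ℝ (Set.range x)) ⊆
      { y : X | ∃ α : ℕ → 𝕜,
          Summable (fun n => ‖α n‖) ∧ (∑' n, ‖α n‖) ≤ 1 ∧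
          HasSum (fun n => α n • x n) y } := by
  intro y hy
  obtain ⟨α, hα, rfl⟩ := subSimplex.closure_convexHull_subset_image hx hy
  obtain ⟨C, hC⟩ := hx.bddAbove_range
  have hnorm : (fun n => ‖(α n : 𝕜)‖) = α := funext fun n => by
    rw [RCLike.norm_ofReal, abs_of_nonneg (hα.1 n)]
  refine ⟨fun n => α n, ?_, ?_, ?_⟩
  · simpa only [hnorm] using subSimplex.summable hα
  · simpa only [hnorm] using subSimplex.tsum_le_one hα
  · simpa only [← RCLike.real_smul_eq_coe_smul] using
      (subSimplex.summable_smul hα fun n => hC ⟨n, rfl⟩).hasSum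
end

section
/- Let X be a Banach space with an approximation scheme (A_n) such that in addition λA_n ⊆ A_n for every scalar λ with |λ| ≤ 1. Suppose (x_{n,k})_{n,k} is an order c₀-sequence with x_{n,k} ∈ A_n for all k, and D is a bounded subset of X with D ⊆ { Σ_{n=1}^∞ λ_n x_{n,k(n)} : k : ℕ → ℕ, (λ_n) scalars with Σ_{n=1}^∞ |λ_n| ≤ 1 }. Then D is Q-compact. -/
open Filter Pointwise

/-- An approximation scheme on a normed space `X`: a family `(Aₙ)_{n ≥ 1}` of subsets with
`Aₙ ⊆ A_{n+1}`, `c • Aₙ ⊆ Aₙ` for every scalar `c`, and `Aₘ + Aₙ ⊆ A_{m+n}`. -/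
def IsApproximationScheme (𝕜 : Type*) {X : Type*} [RCLike 𝕜] [NormedAddCommGroup X]
    [NormedSpace 𝕜 X] (A : ℕ → Set X) : Prop :=
  (∀ n : ℕ, 1 ≤ n → A n ⊆ A (n + 1)) ∧
  (∀ (c : 𝕜) (n : ℕ), 1 ≤ n → c • A n ⊆ A n) ∧
  (∀ m n : ℕ, 1 ≤ m → 1 ≤ n → A m + A n ⊆ A (m + n))

/-- The `n`-th Kolmogorov diameter of a set `D` with respect to the scheme `(Aₙ)`:
`δₙ(D) = inf { r > 0 : D ⊆ r·B_X + Aₙ }`. -/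
noncomputable def kolmogorovDiameter {X : Type*} [NormedAddCommGroup X]
    (A : ℕ → Set X) (D : Set X) (n : ℕ) : ℝ :=
  sInf { r : ℝ | 0 < r ∧ D ⊆ Metric.closedBall (0 : X) r + A n }

/-- A set `D` is `Q`-compact with respect to the scheme `(Aₙ)` if `δₙ(D) → 0`. -/
def QCompact {X : Type*} [NormedAddCommGroup X] (A : ℕ → Set X) (D : Set X) : Prop :=
  Tendsto (kolmogorovDiameter A D) atTop (nhds 0)

/-- An order `c₀`-sequence: a double sequence `(x_{n,k})` with `x_{n,k} ∈ Aₙ` for all `k` and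
`‖x_{n,k}‖ → 0` as `n → ∞` uniformly in `k`. -/
def IsOrderC0Seq {X : Type*} [NormedAddCommGroup X] (A : ℕ → Set X)
    (x : ℕ → ℕ → X) : Prop :=
  (∀ n k : ℕ, 1 ≤ n → x n k ∈ A n) ∧
  (∀ ε : ℝ, 0 < ε → ∃ N : ℕ, ∀ n ≥ N, ∀ k : ℕ, ‖x n k‖ ≤ ε)

/-- Monotonicity of an approximation scheme. -/
lemma IsApproximationScheme.mono {𝕜 X : Type*} [RCLike 𝕜] [NormedAddCommGroup X]
    [NormedSpace 𝕜 X] {A : ℕ → Set X} (hA : IsApproximationScheme 𝕜 A)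
    {m n : ℕ} (hm : 1 ≤ m) (hmn : m ≤ n) : A m ⊆ A n := by
  induction n, hmn using Nat.le_induction with
  | base => exact subset_rfl
  | succ n hn ih => exact ih.trans (hA.1 n (hm.trans hn))

/-- Let `X` be a Banach space with an approximation scheme `(Aₙ)` satisfying in addition
`c • Aₙ ⊆ Aₙ` for `‖c‖ ≤ 1`. If `(x_{n,k})` is an order `c₀`-sequence with `x_{n,k} ∈ Aₙ`
and `D` is a bounded subset of `X` with
`D ⊆ { Σ_{n ≥ 1} λₙ x_{n,k(n)} : Σ |λₙ| ≤ 1 }`, then `D` is `Q`-compact. -/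
theorem order_c0_subset_qCompact {𝕜 X : Type*} [RCLike 𝕜]
    [NormedAddCommGroup X] [NormedSpace 𝕜 X] [CompleteSpace X]
    (A : ℕ → Set X) (hA : IsApproximationScheme 𝕜 A)
    (hA1 : ∀ c : 𝕜, ‖c‖ ≤ 1 → ∀ n : ℕ, 1 ≤ n → c • A n ⊆ A n)
    (x : ℕ → ℕ → X) (hx : IsOrderC0Seq A x)
    (D : Set X) (hD : Bornology.IsBounded D)
    (hDx : D ⊆ { y : X | ∃ (k : ℕ → ℕ) (lam : ℕ → 𝕜),
      Summable (fun n => ‖lam n‖) ∧ (∑' n, ‖lam n‖) ≤ 1 ∧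
      HasSum (fun n => lam n • x (n + 1) (k n)) y }) :
    QCompact A D := by
  rw [QCompact, Metric.tendsto_atTop]
  intro ε hε
  -- choose N so that ‖x n k‖ ≤ ε/2 for n ≥ N
  obtain ⟨N₀, hN₀⟩ := hx.2 (ε / 2) (by positivity)
  set N : ℕ := max N₀ 1 with hNdef
  have hN1 : 1 ≤ N := le_max_right _ _
  have hNx : ∀ n ≥ N, ∀ k : ℕ, ‖x n k‖ ≤ ε / 2 := fun n hn k =>
    hN₀ n (le_trans (le_max_left _ _) hn) k
  refine ⟨N * N, fun m hm => ?_⟩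
  have hNN1 : 1 ≤ N * N := Nat.one_le_iff_ne_zero.mpr (by positivity)
  -- claim : D ⊆ (ε/2)·B + A m
  have hclaim : D ⊆ Metric.closedBall (0 : X) (ε / 2) + A m := by
    intro y hy
    obtain ⟨k, lam, hsum, hsum1, hy⟩ := hDx hy
    set f : ℕ → X := fun n => lam n • x (n + 1) (k n) with hf
    have hlam_le : ∀ n, ‖lam n‖ ≤ 1 := fun n =>
      le_trans (Summable.le_tsum hsum n fun i _ => norm_nonneg _) hsum1
    -- the head lies in A (N*N)
    have hgi : ∀ i < N, f i ∈ A N := by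
      intro i hi
      have h1 : f i ∈ A (i + 1) :=
        hA1 (lam i) (hlam_le i) (i + 1) (Nat.succ_le_succ (Nat.zero_le _))
          ⟨x (i + 1) (k i), hx.1 (i + 1) (k i) (Nat.succ_le_succ (Nat.zero_le _)), rfl⟩
      exact hA.mono (Nat.succ_le_succ (Nat.zero_le _)) hi h1
    have hhead : ∀ j, 1 ≤ j → j ≤ N → (∑ i ∈ Finset.range j, f i) ∈ A (j * N) := by
      intro j hj
      induction j, hj using Nat.le_induction with
      | base => intro hjN; simpa using hgi 0 (lt_of_lt_of_le Nat.one_pos hjN)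
      | succ j hj ih =>
        intro hjN
        rw [Finset.sum_range_succ]
        have h1 : (∑ i ∈ Finset.range j, f i) ∈ A (j * N) := ih (le_trans (Nat.le_succ j) hjN)
        have h2 : f j ∈ A N := hgi j (lt_of_lt_of_le (Nat.lt_succ_self j) hjN)
        have := hA.2.2 (j * N) N (Nat.one_le_iff_ne_zero.mpr (by positivity)) hN1
          ⟨_, h1, f j, h2, rfl⟩
        rwa [show j * N + N = (j + 1) * N by ring] at this
    have hheadN : (∑ i ∈ Finset.range N, f i) ∈ A m :=
      hA.mono hNN1 hm (hhead N hN1 le_rfl)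
    -- the tail has norm ≤ ε/2
    have hfsum : Summable f := hy.summable
    have htail_eq : (∑ i ∈ Finset.range N, f i) + (∑' i, f (i + N)) = y := by
      rw [Summable.sum_add_tsum_nat_add N hfsum, hy.tsum_eq]
    have hle : ∀ i : ℕ, ‖f (i + N)‖ ≤ ε / 2 * ‖lam (i + N)‖ := by
      intro i
      rw [hf]
      simp only [norm_smul]
      rw [mul_comm]
      exact mul_le_mul_of_nonneg_right (hNx (i + N + 1) (by omega) _) (norm_nonneg _)
    have hlamsum : Summable (fun i => ‖lam (i + N)‖) := hsum.comp_injective (add_left_injective N)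
    have hsummable : Summable (fun i => ‖f (i + N)‖) :=
      Summable.of_nonneg_of_le (fun i => norm_nonneg _) hle (hlamsum.mul_left _)
    have htail : ‖∑' i, f (i + N)‖ ≤ ε / 2 := by
      calc ‖∑' i, f (i + N)‖ ≤ ∑' i, ‖f (i + N)‖ := norm_tsum_le_tsum_norm hsummable
        _ ≤ ∑' i, ε / 2 * ‖lam (i + N)‖ := Summable.tsum_le_tsum hle hsummable (hlamsum.mul_left _)
        _ = ε / 2 * ∑' i, ‖lam (i + N)‖ := tsum_mul_left
        _ ≤ ε / 2 * 1 := by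
            refine mul_le_mul_of_nonneg_left ?_ (by positivity)
            refine le_trans ?_ hsum1
            have heq := Summable.sum_add_tsum_nat_add (f := fun n => ‖lam n‖) N hsum
            have hpos : 0 ≤ ∑ i ∈ Finset.range N, ‖lam i‖ :=
              Finset.sum_nonneg fun i _ => norm_nonneg _
            linarith
        _ = ε / 2 := mul_one _
    exact ⟨∑' i, f (i + N), Metric.mem_closedBall.mpr (by simpa using htail), _, hheadN,
      by simpa [add_comm] using htail_eq⟩
  -- conclude
  have hnonneg : 0 ≤ kolmogorovDiameter A D m :=
    Real.sInf_nonneg (fun r hr => le_of_lt hr.1)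
  have hle : kolmogorovDiameter A D m ≤ ε / 2 :=
    csInf_le ⟨0, fun r hr => le_of_lt hr.1⟩ ⟨by positivity, hclaim⟩
  rw [Real.dist_eq, abs_of_nonneg (by simpa using hnonneg)]
  simpa using lt_of_le_of_lt hle (by linarith)
end

section
/- Let X be a Banach space and T : X → X a bounded linear operator. Then inf{ ‖T − B‖ : B ∈ L(X) of finite rank } ≤ 3 · inf{ ‖T* − C‖ : C ∈ L(X*) of finite rank }, where T* : X* → X* is the adjoint of T. -/
/-!
Write the finite-rank operator `C` on `X*` as `C g = ∑ s, ψ s g • f s` with `f s ∈ X*` and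
`ψ s ∈ X**`, and let `d = ‖T* - C‖`. For `v ∈ X` the vector `∑ s, f s v • ψ s ∈ X**` lies within
`d * ‖v‖` of `T v`. A Hahn–Banach separation in a finite power of `X` pulls finitely many such norm
constraints back from `X**` to `X` at the cost of `ε`: there are `x s ∈ X` with
`‖T p - ∑ s, f s p • x s‖ < d + ε` for every `p` in a finite set `t` of the unit ball on which the
map `(f s)_s` is `δ`-dense, and with `‖x s‖ < ‖ψ s‖ + ε`. Put `B = ∑ s, f s ⊗ x s`. Given
`‖z‖ ≤ 1`, pick `p ∈ t` with every `f s (z - p)` small: then `‖(T - B) (z - p)‖ ≤ 2 * d + O(δ)`,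
because `‖z - p‖ ≤ 2`, and `‖(T - B) p‖ < d + ε`, hence the factor `3`.
-/

open NormedSpace RCLike

-- Without these shortcuts, instance search fails on `IsBoundedSMul 𝕜` for the bidual and the
-- `norm_*` lemmas do not rewrite there.
noncomputable instance bidualNormedAddCommGroup {𝕜 X : Type*} [RCLike 𝕜] [NormedAddCommGroup X]
    [NormedSpace 𝕜 X] : NormedAddCommGroup (StrongDual 𝕜 (StrongDual 𝕜 X)) :=
  ContinuousLinearMap.toNormedAddCommGroup

noncomputable instance bidualNormedSpace {𝕜 X : Type*} [RCLike 𝕜] [NormedAddCommGroup X]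
    [NormedSpace 𝕜 X] : NormedSpace 𝕜 (StrongDual 𝕜 (StrongDual 𝕜 X)) :=
  ContinuousLinearMap.toNormedSpace

section Dual

variable {𝕜 X : Type*} [RCLike 𝕜] [NormedAddCommGroup X] [NormedSpace 𝕜 X]

theorem StrongDual.exists_norm_lt_one_mul_norm_le_re (w : StrongDual 𝕜 X) {θ : ℝ} (hθ : θ < 1) :
    ∃ z : X, ‖z‖ < 1 ∧ θ * ‖w‖ ≤ re (w z) := by
  rcases le_or_gt (θ * ‖w‖) 0 with h | h
  · exact ⟨0, by simpa using h⟩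
  have hw : 0 < ‖w‖ := (norm_nonneg w).lt_of_ne (by rintro h0; simp [← h0] at h)
  obtain ⟨z, hz, hwz⟩ := w.exists_lt_apply_of_lt_opNorm (mul_lt_of_lt_one_left hw hθ)
  have hwz0 : w z ≠ 0 := norm_pos_iff.1 (h.trans hwz)
  refine ⟨((starRingEnd 𝕜 (w z)) / ‖w z‖) • z, ?_, ?_⟩
  · rw [norm_smul, norm_div, RCLike.norm_conj, norm_ofReal, abs_norm,
      div_self (norm_ne_zero_iff.2 hwz0), one_mul]
    exact hz
  · have : w (((starRingEnd 𝕜 (w z)) / ‖w z‖) • z) = ((‖w z‖ : ℝ) : 𝕜) := by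
      rw [map_smul, smul_eq_mul, div_mul_eq_mul_div, RCLike.conj_mul, pow_two, mul_div_assoc,
        div_self (by simpa using hwz0), mul_one]
    rw [this, ofReal_re]
    exact hwz.le

theorem LinearMap.eq_zero_of_forall_le_re {E : Type*} [AddCommGroup E] [Module 𝕜 E]
    (g : E →ₗ[𝕜] 𝕜) {u : ℝ} (h : ∀ x, u ≤ re (g x)) : g = 0 := by
  ext x
  have hscale : ∀ t : ℝ, u ≤ t * ‖g x‖ ^ 2 := fun t => by
    have : g ((t : 𝕜) • (starRingEnd 𝕜 (g x)) • x) = ((t * ‖g x‖ ^ 2 : ℝ) : 𝕜) := by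
      rw [map_smul, map_smul, smul_eq_mul, smul_eq_mul, RCLike.conj_mul]; push_cast; ring
    simpa only [this, ofReal_re] using h ((t : 𝕜) • (starRingEnd 𝕜 (g x)) • x)
  by_contra hne
  have hpos : 0 < ‖g x‖ ^ 2 := by positivity
  have := hscale ((u - 1) / ‖g x‖ ^ 2)
  rw [div_mul_cancel₀ _ hpos.ne'] at this
  linarith

theorem sum_mul_norm_le_of_forall_sum_re_lt {ι : Type*} [Fintype ι] (w : ι → StrongDual 𝕜 X)
    {ρ : ι → ℝ} (hρ : ∀ j, 0 < ρ j) {u : ℝ}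
    (h : ∀ z : ι → X, (∀ j, ‖z j‖ < ρ j) → ∑ j, re (w j (z j)) < u) :
    ∑ j, ρ j * ‖w j‖ ≤ u := by
  have hθ : ∀ θ < 1, θ * ∑ j, ρ j * ‖w j‖ < u := by
    intro θ hθ
    choose z hz hwz using fun j => (w j).exists_norm_lt_one_mul_norm_le_re hθ
    calc θ * ∑ j, ρ j * ‖w j‖ = ∑ j, ρ j * (θ * ‖w j‖) := by
          rw [Finset.mul_sum]; exact Finset.sum_congr rfl fun j _ => by ring
      _ ≤ ∑ j, re (w j ((ρ j : 𝕜) • z j)) := Finset.sum_le_sum fun j _ => by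
          rw [map_smul, smul_eq_mul, re_ofReal_mul]
          exact mul_le_mul_of_nonneg_left (hwz j) (hρ j).le
      _ < u := h _ fun j => by
          rw [norm_smul, norm_ofReal, abs_of_pos (hρ j)]
          exact mul_lt_of_lt_one_right (hρ j) (hz j)
  set S := ∑ j, ρ j * ‖w j‖
  refine le_of_forall_lt fun c hc => ?_
  rcases (Finset.sum_nonneg fun j _ => mul_nonneg (hρ j).le (norm_nonneg (w j))).eq_or_lt with
    hS | hS
  · have := hθ 0 one_pos
    rw [zero_mul] at this
    linarith
  · have := hθ (c / S) ((div_lt_one hS).2 hc)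
    rwa [div_mul_cancel₀ c hS.ne'] at this

theorem exists_approx_solution_of_bidual_solution {ι σ : Type*} [Fintype ι] [Fintype σ]
    (a : ι → σ → 𝕜) (ψ : σ → StrongDual 𝕜 (StrongDual 𝕜 X)) (y : ι → X) {r : ι → ℝ}
    (hψ : ∀ j, ‖∑ s, a j s • ψ s - inclusionInDoubleDualLi 𝕜 (y j)‖ ≤ r j)
    {ε : ℝ} (hε : 0 < ε) :
    ∃ x : σ → X, ∀ j, ‖∑ s, a j s • x s - y j‖ < r j + ε := by
  -- Otherwise some `f` separates the balls around `y` from the range of `L`. Its components `w j`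
  -- satisfy `∑ j, a j s • w j = 0`, so pairing with `ψ` bounds `∑ j, re (w j (y j))` from below
  -- by `-∑ j, r j * ‖w j‖`, while the separation bounds it from above by
  -- `-∑ j, (r j + ε) * ‖w j‖`; hence `w = 0`.
  classical
  let : NormedSpace ℝ X := NormedSpace.restrictScalars ℝ 𝕜 X
  have : IsScalarTower ℝ 𝕜 X := IsScalarTower.of_algebraMap_smul fun _ _ => rfl
  have hρ : ∀ j, 0 < r j + ε := fun j => by
    linarith [(ContinuousLinearMap.opNorm_nonneg _).trans (hψ j)]
  let L : (σ → X) →ₗ[𝕜] ι → X := LinearMap.pi fun j => ∑ s, a j s • LinearMap.proj s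
  have hL : ∀ x j, L x j = ∑ s, a j s • x s := fun x j => by simp [L]
  let V : Set (ι → X) := Set.univ.pi fun j => Metric.ball (y j) (r j + ε)
  by_contra! hno
  have hdisj : Disjoint V ((LinearMap.range L).restrictScalars ℝ : Set (ι → X)) := by
    refine Set.disjoint_left.2 fun z hzV ⟨x, hx⟩ => ?_
    obtain ⟨j, hj⟩ := hno x
    have := hzV j (Set.mem_univ j)
    rw [← hx, Metric.mem_ball, dist_eq_norm, hL] at this
    exact hj.not_gt this
  obtain ⟨f, u, hfV, hfL⟩ := RCLike.geometric_hahn_banach_open (𝕜 := 𝕜)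
    (convex_pi fun j _ => convex_ball (y j) (r j + ε))
    (isOpen_set_pi Set.finite_univ fun j _ => Metric.isOpen_ball) (Submodule.convex _) hdisj
  let w : ι → StrongDual 𝕜 X := fun j => f.comp (ContinuousLinearMap.single 𝕜 (fun _ => X) j)
  have hfw : ∀ z, f z = ∑ j, w j (z j) := fun z => by
    conv_lhs => rw [← Finset.univ_sum_single z]
    simp [w, map_sum]
  have hfL0 : (f : (ι → X) →ₗ[𝕜] 𝕜).comp L = 0 :=
    LinearMap.eq_zero_of_forall_le_re _ fun x => hfL _ ⟨x, rfl⟩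
  have hw : ∀ s, ∑ j, a j s • w j = 0 := fun s => by
    ext v
    simpa [hfw, hL, Pi.single_apply] using LinearMap.congr_fun hfL0 (Pi.single s v)
  have hψw : ∑ j, (∑ s, a j s • ψ s) (w j) = 0 := by
    simp only [sum_apply, smul_apply]
    rw [Finset.sum_comm]
    simp only [← map_smul, ← map_sum, hw, map_zero, Finset.sum_const_zero]
  have hupper : ∑ j, re (w j (y j)) + ∑ j, (r j + ε) * ‖w j‖ ≤ u := by
    have := sum_mul_norm_le_of_forall_sum_re_lt w hρ (u := u - ∑ j, re (w j (y j)))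
      fun z hz => by
        have := hfV (y + z) fun j _ => by simpa [dist_eq_norm] using hz j
        simp only [hfw, Pi.add_apply, map_add, Finset.sum_add_distrib, map_sum] at this
        linarith
    linarith
  have hlower : -∑ j, r j * ‖w j‖ ≤ ∑ j, re (w j (y j)) := by
    have hsplit : ∀ j, re (w j (y j)) = re ((∑ s, a j s • ψ s) (w j)) -
        re ((∑ s, a j s • ψ s - inclusionInDoubleDualLi 𝕜 (y j)) (w j)) := fun j => by
      rw [sub_apply, map_sub, sub_sub_cancel]
      rfl
    rw [Finset.sum_congr rfl fun j _ => hsplit j, Finset.sum_sub_distrib, ← map_sum, hψw,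
      map_zero, zero_sub, neg_le_neg_iff]
    exact Finset.sum_le_sum fun j _ => (re_le_norm _).trans <|
      (ContinuousLinearMap.le_opNorm _ _).trans (mul_le_mul_of_nonneg_right (hψ j) (norm_nonneg _))
  have hu : u ≤ 0 := by simpa using hfL 0 (zero_mem _)
  have hN : ε * ∑ j, ‖w j‖ ≤ 0 := by
    simp only [add_mul, Finset.sum_add_distrib, ← Finset.mul_sum] at hupper
    linarith
  have hw0 : ∀ j, w j = 0 := fun j => norm_eq_zero.1 <| le_antisymm
    ((Finset.single_le_sum (fun j _ => norm_nonneg (w j)) (Finset.mem_univ j)).trans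
      (nonpos_of_mul_nonpos_right hN hε)) (norm_nonneg _)
  have := hfV y fun j _ => by simpa using hρ j
  simp [hfw, hw0] at this
  linarith

end Dual

section FiniteRank

variable {𝕜 E F : Type*} [NontriviallyNormedField 𝕜] [NormedAddCommGroup E] [NormedSpace 𝕜 E]
  [NormedAddCommGroup F] [NormedSpace 𝕜 F]

theorem ContinuousLinearMap.exists_eq_sum_smul_of_finiteDimensional_range [CompleteSpace 𝕜]
    (C : E →L[𝕜] F) [FiniteDimensional 𝕜 (LinearMap.range (C : E →ₗ[𝕜] F))] :
    ∃ (n : ℕ) (f : Fin n → F) (ψ : Fin n → StrongDual 𝕜 E), ∀ g, C g = ∑ s, ψ s g • f s := by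
  let b := Module.finBasis 𝕜 (LinearMap.range (C : E →ₗ[𝕜] F))
  let Cr := C.codRestrict _ (LinearMap.mem_range_self (C : E →ₗ[𝕜] F))
  refine ⟨_, fun s => b s, fun s => LinearMap.toContinuousLinearMap (b.coord s) ∘L Cr,
    fun g => ?_⟩
  have h := congrArg Subtype.val (b.sum_repr (Cr g))
  simp only [Submodule.coe_sum, Submodule.coe_smul] at h
  exact h.symm

theorem ContinuousLinearMap.exists_finset_forall_norm_sub_lt [ProperSpace F] (Φ : E →L[𝕜] F)
    {δ : ℝ} (hδ : 0 < δ) :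
    ∃ t : Finset E, (∀ p ∈ t, ‖p‖ ≤ 1) ∧ ∀ z, ‖z‖ ≤ 1 → ∃ p ∈ t, ‖Φ z - Φ p‖ < δ := by
  have hA : TotallyBounded (Φ '' Metric.closedBall 0 1) :=
    (Φ.lipschitz.isBounded_image Metric.isBounded_closedBall).isCompact_closure.totallyBounded
      |>.subset subset_closure
  obtain ⟨t, ht, htfin, hcover⟩ :=
    Set.exists_subset_image_finite_and.1 (Metric.finite_approx_of_totallyBounded hA δ hδ)
  refine ⟨htfin.toFinset, fun p hp => by simpa using ht (htfin.mem_toFinset.1 hp), fun z hz => ?_⟩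
  obtain ⟨_, ⟨p, hp, rfl⟩, hzp⟩ := Set.mem_iUnion₂.1 (hcover ⟨z, by simpa using hz, rfl⟩)
  exact ⟨p, htfin.mem_toFinset.2 hp, by rwa [← dist_eq_norm]⟩

theorem ContinuousLinearMap.finiteDimensional_range_sum_smulRight {σ : Type*} [Fintype σ]
    (f : σ → StrongDual 𝕜 E) (x : σ → F) :
    FiniteDimensional 𝕜
      (LinearMap.range ((∑ s, (f s).smulRight (x s) : E →L[𝕜] F) : E →ₗ[𝕜] F)) := by
  have := FiniteDimensional.span_of_finite 𝕜 (Set.finite_range x)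
  refine Submodule.finiteDimensional_of_le (S₂ := Submodule.span 𝕜 (Set.range x)) ?_
  rintro _ ⟨v, rfl⟩
  simpa using Submodule.sum_mem _ fun s _ =>
    Submodule.smul_mem _ (f s v) (Submodule.subset_span (Set.mem_range_self s))

end FiniteRank

section Approximation

variable {𝕜 X Y : Type*} [RCLike 𝕜] [NormedAddCommGroup X] [NormedSpace 𝕜 X]
  [NormedAddCommGroup Y] [NormedSpace 𝕜 Y] {σ : Type*} [Fintype σ]
  (T : X →L[𝕜] Y) (C : StrongDual 𝕜 Y →L[𝕜] StrongDual 𝕜 X)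
  {f : σ → StrongDual 𝕜 X} {ψ : σ → StrongDual 𝕜 (StrongDual 𝕜 Y)}

theorem norm_sum_smul_sub_inclusionInDoubleDualLi_le (hC : ∀ g, C g = ∑ s, ψ s g • f s) (v : X) :
    ‖∑ s, f s v • ψ s - inclusionInDoubleDualLi 𝕜 (T v)‖ ≤
      ‖(ContinuousLinearMap.compL 𝕜 X Y 𝕜).flip T - C‖ * ‖v‖ := by
  refine ContinuousLinearMap.opNorm_le_bound _ (by positivity) fun g => ?_
  have : (∑ s, f s v • ψ s - inclusionInDoubleDualLi 𝕜 (T v)) g =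
      -(((ContinuousLinearMap.compL 𝕜 X Y 𝕜).flip T - C) g v) := by
    simp [hC, mul_comm]
    rfl
  rw [this, norm_neg]
  calc _ ≤ _ := ContinuousLinearMap.le_opNorm₂ _ _ _
    _ = _ := by ring

theorem norm_apply_sub_sum_smul_le (hC : ∀ g, C g = ∑ s, ψ s g • f s) (x : σ → Y) (v : X) :
    ‖T v - ∑ s, f s v • x s‖ ≤ ‖(ContinuousLinearMap.compL 𝕜 X Y 𝕜).flip T - C‖ * ‖v‖ +
      ∑ s, ‖f s v‖ * (‖ψ s‖ + ‖x s‖) := by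
  let J := inclusionInDoubleDualLi 𝕜 (E := Y)
  have hsplit : J (T v - ∑ s, f s v • x s) =
      -(∑ s, f s v • ψ s - J (T v)) + ∑ s, f s v • ψ s - ∑ s, f s v • J (x s) := by
    simp [map_sum]
  rw [← J.norm_map, hsplit]
  calc _ ≤ ‖-(∑ s, f s v • ψ s - J (T v))‖ + ‖∑ s, f s v • ψ s‖ + ‖∑ s, f s v • J (x s)‖ :=
        norm_sub_le_of_le (norm_add_le _ _) le_rfl
    _ ≤ ‖(ContinuousLinearMap.compL 𝕜 X Y 𝕜).flip T - C‖ * ‖v‖ + ∑ s, ‖f s v‖ * ‖ψ s‖ +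
        ∑ s, ‖f s v‖ * ‖x s‖ := by
      gcongr
      · rw [norm_neg]; exact norm_sum_smul_sub_inclusionInDoubleDualLi_le T C hC v
      · exact norm_sum_le_of_le _ fun s _ => norm_smul_le _ _
      · exact norm_sum_le_of_le _ fun s _ => (norm_smul_le _ _).trans_eq (by rw [J.norm_map])
    _ = _ := by simp only [mul_add, Finset.sum_add_distrib]; ring

theorem exists_forall_norm_apply_sub_sum_smul_lt (hC : ∀ g, C g = ∑ s, ψ s g • f s)
    {t : Finset X} (ht : ∀ p ∈ t, ‖p‖ ≤ 1) {η : ℝ} (hη : 0 < η) :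
    ∃ x : σ → Y, (∀ p ∈ t, ‖T p - ∑ s, f s p • x s‖ <
        ‖(ContinuousLinearMap.compL 𝕜 X Y 𝕜).flip T - C‖ + η) ∧ ∀ s, ‖x s‖ < ‖ψ s‖ + η := by
  classical
  obtain ⟨x, hx⟩ := exists_approx_solution_of_bidual_solution
    (Sum.elim (fun (p : t) s => f s p) fun s => Pi.single s 1) ψ (Sum.elim (fun p : t => T p) 0)
    (r := Sum.elim (fun _ => ‖(ContinuousLinearMap.compL 𝕜 X Y 𝕜).flip T - C‖) fun s => ‖ψ s‖)
    (by
      rintro (p | s)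
      · simpa using (norm_sum_smul_sub_inclusionInDoubleDualLi_le T C hC p).trans
          (mul_le_of_le_one_right (norm_nonneg _) (ht p p.2))
      · simp [Pi.single_apply, ite_smul])
    hη
  exact ⟨x, fun p hp => by simpa [norm_sub_rev] using hx (Sum.inl ⟨p, hp⟩),
    fun s => by simpa [Pi.single_apply, ite_smul] using hx (Sum.inr s)⟩

theorem exists_finiteRank_norm_sub_le
    (hC : FiniteDimensional 𝕜 (LinearMap.range (C : StrongDual 𝕜 Y →ₗ[𝕜] StrongDual 𝕜 X)))
    {ε : ℝ} (hε : 0 < ε) :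
    ∃ B : X →L[𝕜] Y, FiniteDimensional 𝕜 (LinearMap.range (B : X →ₗ[𝕜] Y)) ∧
      ‖T - B‖ ≤ 3 * ‖(ContinuousLinearMap.compL 𝕜 X Y 𝕜).flip T - C‖ + ε := by
  obtain ⟨n, f, ψ, hCψ⟩ := C.exists_eq_sum_smul_of_finiteDimensional_range
  set d := ‖(ContinuousLinearMap.compL 𝕜 X Y 𝕜).flip T - C‖
  set K := ∑ s, (‖ψ s‖ + (‖ψ s‖ + ε / 2))
  set δ := ε / 2 / (K + 1)
  have hδ : 0 < δ := by positivity
  have hδK : δ * K ≤ ε / 2 := by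
    rw [div_mul_eq_mul_div, div_le_iff₀ (by positivity)]
    nlinarith [show 0 ≤ K by positivity]
  obtain ⟨t, ht1, hnet⟩ := (ContinuousLinearMap.pi f).exists_finset_forall_norm_sub_lt hδ
  obtain ⟨x, hxp, hxs⟩ := exists_forall_norm_apply_sub_sum_smul_lt T C hCψ ht1 (half_pos hε)
  set B := ∑ s, (f s).smulRight (x s)
  have hB : ∀ v, B v = ∑ s, f s v • x s := fun v => by simp [B]
  refine ⟨B, ContinuousLinearMap.finiteDimensional_range_sum_smulRight f x,
    ContinuousLinearMap.opNorm_le_of_unit_norm (by positivity) fun z hz => ?_⟩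
  obtain ⟨p, hp, hzp⟩ := hnet z hz.le
  have hfzp : ∀ s, ‖f s (z - p)‖ ≤ δ := fun s => by
    simpa using (norm_le_pi_norm (ContinuousLinearMap.pi f z - ContinuousLinearMap.pi f p) s).trans
      hzp.le
  have hnear : ‖(T - B) (z - p)‖ ≤ 2 * d + ε / 2 := calc
    ‖(T - B) (z - p)‖ ≤ d * ‖z - p‖ + ∑ s, ‖f s (z - p)‖ * (‖ψ s‖ + ‖x s‖) := by
        simpa [hB] using norm_apply_sub_sum_smul_le T C hCψ x (z - p)
    _ ≤ d * 2 + ∑ s, δ * (‖ψ s‖ + (‖ψ s‖ + ε / 2)) := by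
        gcongr with s
        · linarith [norm_sub_le z p, ht1 p hp]
        · exact hfzp s
        · exact (hxs s).le
    _ ≤ 2 * d + ε / 2 := by rw [← Finset.mul_sum]; linarith
  calc ‖(T - B) z‖ ≤ ‖(T - B) p‖ + ‖(T - B) (z - p)‖ := by
        rw [map_sub]; exact norm_le_insert' _ _
    _ ≤ (d + ε / 2) + (2 * d + ε / 2) := add_le_add (by simpa [hB] using (hxp p hp).le) hnear
    _ = 3 * d + ε := by ring

end Approximation

theorem dist_finiteRank_le_three_mul_dist_adjoint_general {𝕜 X : Type*} [RCLike 𝕜]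
    [NormedAddCommGroup X] [NormedSpace 𝕜 X]
    (T : X →L[𝕜] X) :
    sInf { r : ℝ | ∃ B : X →L[𝕜] X,
        FiniteDimensional 𝕜 (LinearMap.range (B : X →ₗ[𝕜] X)) ∧ r = ‖T - B‖ } ≤
      3 * sInf { r : ℝ | ∃ C : (X →L[𝕜] 𝕜) →L[𝕜] (X →L[𝕜] 𝕜),
        FiniteDimensional 𝕜 (LinearMap.range (C : (X →L[𝕜] 𝕜) →ₗ[𝕜] (X →L[𝕜] 𝕜))) ∧
        r = ‖(ContinuousLinearMap.compL 𝕜 X X 𝕜).flip T - C‖ } := by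
  rw [← div_le_iff₀' three_pos]
  refine le_csInf ⟨_, 0, ?_, rfl⟩ ?_
  · rw [ContinuousLinearMap.toLinearMap_zero, LinearMap.range_zero]
    infer_instance
  rintro _ ⟨C, hC, rfl⟩
  refine le_of_forall_pos_le_add fun ε hε => ?_
  obtain ⟨B, hB, hTB⟩ := exists_finiteRank_norm_sub_le T C hC (mul_pos three_pos hε)
  rw [div_le_iff₀' three_pos]
  refine csInf_le_of_le ⟨0, ?_⟩ ⟨B, hB, rfl⟩ (by linarith)
  rintro _ ⟨B, -, rfl⟩
  exact norm_nonneg _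

/-- The distance from `T` to the finite-rank operators on `X` is at most three times the
distance from the Banach-space adjoint `T*` to the finite-rank operators on `X*`. -/
theorem dist_finiteRank_le_three_mul_dist_adjoint {𝕜 X : Type*} [RCLike 𝕜]
    [NormedAddCommGroup X] [NormedSpace 𝕜 X] [CompleteSpace X]
    (T : X →L[𝕜] X) :
    sInf { r : ℝ | ∃ B : X →L[𝕜] X,
        FiniteDimensional 𝕜 (LinearMap.range (B : X →ₗ[𝕜] X)) ∧ r = ‖T - B‖ } ≤
      3 * sInf { r : ℝ | ∃ C : (X →L[𝕜] 𝕜) →L[𝕜] (X →L[𝕜] 𝕜),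
        FiniteDimensional 𝕜 (LinearMap.range (C : (X →L[𝕜] 𝕜) →ₗ[𝕜] (X →L[𝕜] 𝕜))) ∧
        r = ‖(ContinuousLinearMap.compL 𝕜 X X 𝕜).flip T - C‖ } :=
  dist_finiteRank_le_three_mul_dist_adjoint_general T
end
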